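/- arXiv:1505.04693 — 11 statements merged into one kernel-verified Lean document; each statement's English description precedes it below -/
import Mathlib

section
/- Let M ≥ 1 be an integer and k ≥ 1 an integer. Let C_1, …, C_k ≥ 0, T_1, …, T_k > 0 and D_k > 0 be real numbers, let U_i = C_i/T_i, and let Δ_k = max{U_k, C_k/D_k}. Suppose the index set {1, …, k−1} is partitioned into pairwise disjoint sets S_1, …, S_M (with union {1,…,k−1}), and the set {1, …, M} is partitioned into two disjoint sets M1 and M2 such that: for every m ∈ M1, C_k + Σ_{i∈S_m} (1 + D_k/T_i)·C_i > D_k, and for every m ∈ M2, U_k + Σ_{i∈S_m} U_i > 1. Then (3 − 1/M) · max{ Δ_k, (Σ_{i=1}^{k} U_i)/M, (Σ_{i=1}^{k} C_i)/(M·D_k) } > 1. -/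
/-!
Write `w i = U i + C i / D_k` for the combined load of task `i`. On a processor `m` where the
linear test fails, dividing that test by `D_k` gives `1 < C_k / D_k + ∑_{S m} w`; where the
utilization test fails, `1 < U_k + ∑_{S m} U ≤ U_k + ∑_{S m} w`. Either way
`1 < Δ_k + ∑_{S m} w`. Summing over the `M` processors, which partition the tasks `1, …, k-1`,
and using `Δ_k ≤ w k`, gives `M < (M - 1) Δ_k + ∑ U + (∑ C) / D_k`, and each of the three terms is
bounded through the maximum `L` in the conclusion, so `M < (3M - 1) L`.
-/

open Finset

theorem one_lt_max_add_sum_of_tests_fail {ι : Type*} {s : Finset ι} {C T U : ι → ℝ}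
    {Ck Uk D : ℝ} (hD : 0 < D) (hC : ∀ i ∈ s, 0 ≤ C i) (hU : ∀ i ∈ s, U i = C i / T i)
    (h : D < Ck + ∑ i ∈ s, (1 + D / T i) * C i ∨ 1 < Uk + ∑ i ∈ s, U i) :
    1 < max Uk (Ck / D) + ∑ i ∈ s, (U i + C i / D) := by
  rcases h with hlin | hutil
  · have hload : ∑ i ∈ s, (U i + C i / D) = (∑ i ∈ s, (1 + D / T i) * C i) / D := by
      rw [sum_div]
      refine sum_congr rfl fun i hi => ?_
      rw [hU i hi]
      field_simp
      ring
    calc 1 < (Ck + ∑ i ∈ s, (1 + D / T i) * C i) / D := (one_lt_div hD).mpr hlin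
      _ = Ck / D + ∑ i ∈ s, (U i + C i / D) := by rw [hload, add_div]
      _ ≤ _ := by gcongr; exact le_max_right _ _
  · calc 1 < Uk + ∑ i ∈ s, U i := hutil
      _ ≤ _ := by
        gcongr with i hi
        · exact le_max_left _ _
        · exact le_add_of_nonneg_right (div_nonneg (hC i hi) hD.le)

theorem card_lt_card_mul_add_sum_biUnion {α β : Type*} [DecidableEq β] {P : Finset α}
    {S : α → Finset β} (hS : (P : Set α).PairwiseDisjoint S) (hP : P.Nonempty) (w : β → ℝ)
    (c : ℝ) (h : ∀ m ∈ P, 1 < c + ∑ i ∈ S m, w i) :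
    (#P : ℝ) < #P * c + ∑ i ∈ P.biUnion S, w i := by
  simpa [sum_biUnion hS, sum_add_distrib] using sum_lt_sum_of_nonempty hP h

theorem one_lt_three_sub_inv_mul_max {M Δ u v : ℝ} (hM : 1 ≤ M)
    (h : M < (M - 1) * Δ + u + v) :
    1 < (3 - 1 / M) * max Δ (max (u / M) (v / M)) := by
  set L := max Δ (max (u / M) (v / M))
  have hM₀ : 0 < M := one_pos.trans_le hM
  have hΔ : Δ ≤ L := le_max_left _ _
  have hu : u ≤ M * L :=
    (div_le_iff₀' hM₀).mp ((le_max_left _ _).trans (le_max_right _ _))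
  have hv : v ≤ M * L :=
    (div_le_iff₀' hM₀).mp ((le_max_right _ _).trans (le_max_right _ _))
  have hL : M < (3 * M - 1) * L := by
    nlinarith [mul_le_mul_of_nonneg_left hΔ (sub_nonneg.mpr hM)]
  rw [show (3 - 1 / M) * L = (3 * M - 1) * L / M by field_simp, one_lt_div hM₀]
  exact hL

theorem stmt_0_general
    (M k : ℕ) (hM : 1 ≤ M) (hk : 1 ≤ k)
    (C T : ℕ → ℝ) (Dk : ℝ)
    (hC : ∀ i ∈ Finset.Icc 1 k, 0 ≤ C i)
    (hT : ∀ i ∈ Finset.Icc 1 k, 0 < T i)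
    (hDk : 0 < Dk)
    (U : ℕ → ℝ) (hU : ∀ i, U i = C i / T i)
    (Δk : ℝ) (hΔk : Δk = max (U k) (C k / Dk))
    (S : ℕ → Finset ℕ)
    (hSdisj : ∀ m ∈ Finset.Icc 1 M, ∀ m' ∈ Finset.Icc 1 M, m ≠ m' → Disjoint (S m) (S m'))
    (hSunion : (Finset.Icc 1 M).biUnion S = Finset.Icc 1 (k - 1))
    (M1 M2 : Finset ℕ)
    (hMunion : M1 ∪ M2 = Finset.Icc 1 M)
    (h1 : ∀ m ∈ M1, C k + ∑ i ∈ S m, (1 + Dk / T i) * C i > Dk)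
    (h2 : ∀ m ∈ M2, U k + ∑ i ∈ S m, U i > 1) :
    (3 - 1 / (M : ℝ)) *
      max Δk (max ((∑ i ∈ Finset.Icc 1 k, U i) / M)
        ((∑ i ∈ Finset.Icc 1 k, C i) / (M * Dk))) > 1 := by
  have hkk : k ∈ Icc 1 k := mem_Icc.mpr ⟨hk, le_rfl⟩
  have hproc : ∀ m ∈ Icc 1 M, 1 < Δk + ∑ i ∈ S m, (U i + C i / Dk) := fun m hm => by
    have hSm : S m ⊆ Icc 1 k := fun i hi =>
      Icc_subset_Icc_right (Nat.sub_le k 1) (hSunion ▸ mem_biUnion.mpr ⟨m, hm, hi⟩)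
    rw [hΔk]
    exact one_lt_max_add_sum_of_tests_fail hDk (fun i hi => hC i (hSm hi)) (fun i _ => hU i)
      ((mem_union.mp (hMunion ▸ hm)).imp (h1 m) (h2 m))
  have hsum := card_lt_card_mul_add_sum_biUnion (fun a ha b hb => hSdisj a ha b hb)
    ⟨1, mem_Icc.mpr ⟨le_rfl, hM⟩⟩ _ _ hproc
  rw [hSunion, Nat.card_Icc, Nat.add_sub_cancel] at hsum
  have hsplit : ∑ i ∈ Icc 1 k, (U i + C i / Dk)
      = ∑ i ∈ Icc 1 (k - 1), (U i + C i / Dk) + (U k + C k / Dk) := by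
    obtain ⟨j, rfl⟩ := Nat.exists_eq_add_of_le' hk
    exact sum_Icc_succ_top (by omega) _
  have hΔle : Δk ≤ U k + C k / Dk := hΔk ▸ max_le_add_of_nonneg
    (hU k ▸ div_nonneg (hC k hkk) (hT k hkk).le) (div_nonneg (hC k hkk) hDk.le)
  rw [div_mul_eq_div_div_swap]
  refine one_lt_three_sub_inv_mul_max (by exact_mod_cast hM) ?_
  rw [sum_add_distrib, ← sum_div] at hsplit
  linarith

/-- Arithmetic core of Theorem 2 (speedup factor `3 - 1/M` of
deadline-monotonic partitioning for arbitrary-deadline sporadic tasks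
under the Fisher–Baruah–Baker linear schedulability test). -/
theorem stmt_0
    (M k : ℕ) (hM : 1 ≤ M) (hk : 1 ≤ k)
    (C T : ℕ → ℝ) (Dk : ℝ)
    (hC : ∀ i ∈ Finset.Icc 1 k, 0 ≤ C i)
    (hT : ∀ i ∈ Finset.Icc 1 k, 0 < T i)
    (hDk : 0 < Dk)
    (U : ℕ → ℝ) (hU : ∀ i, U i = C i / T i)
    (Δk : ℝ) (hΔk : Δk = max (U k) (C k / Dk))
    (S : ℕ → Finset ℕ)
    (hSdisj : ∀ m ∈ Finset.Icc 1 M, ∀ m' ∈ Finset.Icc 1 M, m ≠ m' → Disjoint (S m) (S m'))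
    (hSunion : (Finset.Icc 1 M).biUnion S = Finset.Icc 1 (k - 1))
    (M1 M2 : Finset ℕ)
    (hMdisj : Disjoint M1 M2)
    (hMunion : M1 ∪ M2 = Finset.Icc 1 M)
    (h1 : ∀ m ∈ M1, C k + ∑ i ∈ S m, (1 + Dk / T i) * C i > Dk)
    (h2 : ∀ m ∈ M2, U k + ∑ i ∈ S m, U i > 1) :
    (3 - 1 / (M : ℝ)) *
      max Δk (max ((∑ i ∈ Finset.Icc 1 k, U i) / M)
        ((∑ i ∈ Finset.Icc 1 k, C i) / (M * Dk))) > 1 :=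
  stmt_0_general M k hM hk C T Dk hC hT hDk U hU Δk hΔk S hSdisj hSunion M1 M2 hMunion h1 h2
end

section
/- Let k ≥ 1 be an integer, let C > 0, α > 0 and β > 0 be real numbers, let U_1, …, U_{k−1} > 0 be reals, and let 0 < t_1 ≤ t_2 ≤ … ≤ t_k be reals. If C/t_k ≤ (α/β + 1)/(∏_{j=1}^{k−1} (β·U_j + 1)) − α/β, then there exists an index j ∈ {1, …, k} such that C + Σ_{i=1}^{k−1} α·t_i·U_i + Σ_{i=1}^{j−1} β·t_i·U_i ≤ t_j. -/
/-!
Suppose no point works and put `X = C + ∑ α tᵢ Uᵢ`. Failure at `tᵢ` bounds the increment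
`β tᵢ Uᵢ` of the partial sums `Sₘ = ∑_{i ≤ m} β tᵢ Uᵢ` by `β Uᵢ (X + Sᵢ₋₁)`, so `X + Sₘ` grows at
most by the factor `β Uᵢ + 1` per step. Since `X = C + (α/β) S`, the resulting bound
`X + S ≤ X ∏ (β Uᵢ + 1)` solves to `X + S ≤ t_k` under the hypothesis on `C / t_k`,
contradicting the failure at `t_k`.
-/

open Finset

theorem add_sum_le_mul_prod_add_one {R : Type*} [CommSemiring R] [PartialOrder R]
    [IsOrderedRing R] (X : R) (f w : ℕ → R) (m : ℕ) (hw : ∀ i ∈ Icc 1 m, 0 ≤ w i)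
    (hf : ∀ i ∈ Icc 1 m, f i ≤ w i * (X + ∑ j ∈ Icc 1 (i - 1), f j)) :
    X + ∑ i ∈ Icc 1 m, f i ≤ X * ∏ i ∈ Icc 1 m, (w i + 1) := by
  induction m with
  | zero => simp
  | succ m ih =>
    have hmem : m + 1 ∈ Icc 1 (m + 1) := by simp
    have hsub : Icc 1 m ⊆ Icc 1 (m + 1) := Icc_subset_Icc_right m.le_succ
    have hstep := hf (m + 1) hmem
    rw [Nat.add_sub_cancel] at hstep
    rw [sum_Icc_succ_top (by omega), prod_Icc_succ_top (by omega), ← add_assoc, ← mul_assoc]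
    calc X + ∑ i ∈ Icc 1 m, f i + f (m + 1)
        ≤ (X + ∑ i ∈ Icc 1 m, f i) * (w (m + 1) + 1) := by
          rw [mul_add_one, mul_comm, add_comm _ (X + _)]; exact add_le_add_right hstep _
      _ ≤ (X * ∏ i ∈ Icc 1 m, (w i + 1)) * (w (m + 1) + 1) := by
          gcongr
          · exact add_nonneg (hw _ hmem) zero_le_one
          · exact ih (fun i hi => hw i (hsub hi)) (fun i hi => hf i (hsub hi))

theorem add_mul_le_of_le_mul_of_div_le {K : Type*} [Field K] [LinearOrder K]
    [IsStrictOrderedRing K] {C g S P T : K} (hC : 0 < C) (hg : 0 ≤ g) (hP : 0 < P)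
    (hT : 0 < T) (hgrowth : C + (g + 1) * S ≤ (C + g * S) * P)
    (hcond : C / T ≤ (g + 1) / P - g) :
    C + (g + 1) * S ≤ T := by
  have hCP : C * P ≤ T * (g + 1 - g * P) := by
    rw [div_le_iff₀ hT, div_sub' hP.ne', div_mul_eq_mul_div, le_div_iff₀ hP] at hcond
    linarith
  have hD : 0 < g + 1 - g * P := pos_of_mul_pos_right ((mul_pos hC hP).trans_le hCP) hT.le
  have hgrowth' := mul_le_mul_of_nonneg_left hgrowth (by linarith : (0 : K) ≤ g + 1)
  refine le_of_mul_le_mul_right ?_ hD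
  linear_combination hgrowth' + hCP

/-- Lemma 2 of the paper: the key lemma of the k²U schedulability-test
framework of Chen, Huang and Liu. -/
theorem stmt_2
    (k : ℕ) (hk : 1 ≤ k)
    (C α β : ℝ) (hC : 0 < C) (hα : 0 < α) (hβ : 0 < β)
    (U : ℕ → ℝ) (hU : ∀ i ∈ Finset.Icc 1 (k - 1), 0 < U i)
    (t : ℕ → ℝ) (ht1 : 0 < t 1)
    (htmono : ∀ i ∈ Finset.Icc 1 k, ∀ j ∈ Finset.Icc 1 k, i ≤ j → t i ≤ t j)
    (hcond : C / t k ≤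
      (α / β + 1) / (∏ j ∈ Finset.Icc 1 (k - 1), (β * U j + 1)) - α / β) :
    ∃ j ∈ Finset.Icc 1 k,
      C + (∑ i ∈ Finset.Icc 1 (k - 1), α * t i * U i) +
        (∑ i ∈ Finset.Icc 1 (j - 1), β * t i * U i) ≤ t j := by
  by_contra! hcon
  set A := ∑ i ∈ Icc 1 (k - 1), α * t i * U i
  set S := ∑ i ∈ Icc 1 (k - 1), β * t i * U i
  have hkmem : k ∈ Icc 1 k := by simp [hk]
  have htk : 0 < t k := ht1.trans_le (htmono 1 (by simp [hk]) k hkmem hk)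
  have hP : 0 < ∏ j ∈ Icc 1 (k - 1), (β * U j + 1) :=
    prod_pos fun j hj => by nlinarith [hU j hj]
  have hgrowth : C + A + S ≤ (C + A) * ∏ j ∈ Icc 1 (k - 1), (β * U j + 1) := by
    refine add_sum_le_mul_prod_add_one _ _ _ _ (fun i hi => (mul_pos hβ (hU i hi)).le)
      fun i hi => ?_
    rw [mul_right_comm]
    exact mul_le_mul_of_nonneg_left
      (hcon i (Icc_subset_Icc_right (Nat.sub_le k 1) hi)).le (mul_pos hβ (hU i hi)).le
  have hA : A = α / β * S := by
    rw [mul_sum]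
    exact sum_congr rfl fun i _ => by field_simp
  have hS : C + A + S = C + (α / β + 1) * S := by rw [hA]; ring
  have hbound := add_mul_le_of_le_mul_of_div_le hC (div_pos hα hβ).le hP htk
    (by rw [← hS, ← hA]; exact hgrowth) hcond
  linarith [hcon k hkmem]
end

section
/- Let k ≥ 1 be an integer, let 0 < t_1 ≤ t_2 ≤ … ≤ t_k be reals, let A be a real number, let β > 0, and let u_1, …, u_{k−1} ≥ 0 be reals. If for every j ∈ {1, …, k} one has t_j < A + β·Σ_{i=1}^{j−1} t_i·u_i, then A > 0 and t_k < A·∏_{i=1}^{k−1} (1 + β·u_i); equivalently, A/t_k > 1/∏_{i=1}^{k−1} (1 + β·u_i). -/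
/-!
Write `S j = A + β ∑_{i ≤ j} t_i u_i` for the right-hand side of the `j+1`-st test point.
Since the `j+1`-st test point is violated, `t_{j+1} ≤ S j`, so
`S (j+1) = S j + β t_{j+1} u_{j+1} ≤ S j (1 + β u_{j+1})`: a discrete Grönwall inequality,
which gives `S (k-1) ≤ A ∏ (1 + β u_i)` and hence `t_k < A ∏ (1 + β u_i)`.
The first test point reads `t_1 < A`, so `A > 0`.
-/

open Finset

theorem add_sum_mul_le_mul_prod_one_add {t w : ℕ → ℝ} {A : ℝ} (n : ℕ)
    (hw : ∀ i ∈ Icc 1 n, 0 ≤ w i)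
    (ht : ∀ j ∈ Icc 1 n, t j ≤ A + ∑ i ∈ Icc 1 (j - 1), t i * w i) :
    A + ∑ i ∈ Icc 1 n, t i * w i ≤ A * ∏ i ∈ Icc 1 n, (1 + w i) := by
  induction n with
  | zero => simp
  | succ n ih =>
    have hIcc : Icc 1 n ⊆ Icc 1 (n + 1) := Icc_subset_Icc_right n.le_succ
    have hS := ih (fun i hi => hw i (hIcc hi)) (fun j hj => ht j (hIcc hj))
    have hwn : 0 ≤ w (n + 1) := hw _ (by simp)
    have htn : t (n + 1) ≤ A + ∑ i ∈ Icc 1 n, t i * w i := by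
      simpa using ht (n + 1) (by simp)
    rw [sum_Icc_succ_top (by omega), prod_Icc_succ_top (by omega), ← mul_assoc]
    calc A + (∑ i ∈ Icc 1 n, t i * w i + t (n + 1) * w (n + 1))
        ≤ (A + ∑ i ∈ Icc 1 n, t i * w i) * (1 + w (n + 1)) := by
          linarith [mul_le_mul_of_nonneg_right htn hwn]
      _ ≤ (A * ∏ i ∈ Icc 1 n, (1 + w i)) * (1 + w (n + 1)) :=
          mul_le_mul_of_nonneg_right hS (by linarith)

/-- The extreme-point lemma underlying Corollary 4: if every one of the `k`
test points of a k-point effective schedulability test is violated, then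
`A > 0` and `t k < A * ∏ (1 + β * u i)`, equivalently `A / t k > 1 / ∏ (1 + β * u i)`. -/
theorem stmt_3
    (k : ℕ) (hk : 1 ≤ k)
    (t : ℕ → ℝ) (ht1 : 0 < t 1)
    (htmono : ∀ i ∈ Finset.Icc 1 k, ∀ j ∈ Finset.Icc 1 k, i ≤ j → t i ≤ t j)
    (A β : ℝ) (hβ : 0 < β)
    (u : ℕ → ℝ) (hu : ∀ i ∈ Finset.Icc 1 (k - 1), 0 ≤ u i)
    (hviol : ∀ j ∈ Finset.Icc 1 k,
      t j < A + β * ∑ i ∈ Finset.Icc 1 (j - 1), t i * u i) :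
    0 < A ∧ t k < A * ∏ i ∈ Finset.Icc 1 (k - 1), (1 + β * u i) ∧
      A / t k > 1 / ∏ i ∈ Finset.Icc 1 (k - 1), (1 + β * u i) := by
  have h1k : 1 ∈ Icc 1 k := by simp [hk]
  have hkk : k ∈ Icc 1 k := by simp [hk]
  have hweight : ∀ i ∈ Icc 1 (k - 1), 0 ≤ β * u i := fun i hi => mul_nonneg hβ.le (hu i hi)
  have hscale : ∀ j, β * ∑ i ∈ Icc 1 j, t i * u i = ∑ i ∈ Icc 1 j, t i * (β * u i) := by
    intro j; rw [mul_sum]; ring_nf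
  have hA : 0 < A := ht1.trans (by simpa using hviol 1 h1k)
  have hgronwall := add_sum_mul_le_mul_prod_one_add (t := t) (A := A) (k - 1) hweight
    fun j hj => by
      rw [← hscale]
      exact (hviol j (Icc_subset_Icc_right (Nat.sub_le k 1) hj)).le
  have htk : t k < A * ∏ i ∈ Icc 1 (k - 1), (1 + β * u i) :=
    (hviol k hkk).trans_le (by rwa [hscale])
  have hP : 0 < ∏ i ∈ Icc 1 (k - 1), (1 + β * u i) :=
    prod_pos fun i hi => by linarith [hweight i hi]
  have htk_pos : 0 < t k := ht1.trans_le (htmono 1 h1k k hkk hk)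
  refine ⟨hA, htk, ?_⟩
  rw [gt_iff_lt, div_lt_div_iff₀ hP htk_pos]
  linarith
end

section
/- Let M ≥ 1 and k ≥ 1 be integers. Let C_1, …, C_k > 0, T_1, …, T_{k−1} > 0 and D_k > 0 be reals, and put U_i = C_i/T_i. Let T*1 = { i < k : T_i < D_k } and T*2 = { i < k : T_i ≥ D_k }, and let C_k' = C_k + (Σ_{i∈T*2} C_i)/M. Suppose that for every real t with 0 < t ≤ D_k one has C_k + (Σ_{i=1}^{k−1} ⌈t/T_i⌉·C_i)/M > t. Then C_k'/D_k + (Σ_{i∈T*1} ⌊D_k/T_i⌋·T_i·U_i)/(M·D_k) > 1/∏_{i∈T*1} (1 + U_i/M). -/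
/-!
Write `D = D_k` and `g_i = ⌊D/T_i⌋·T_i` for the last release of `τ_i ∈ T*1` up to `D`, and let
`A = C_k' + (∑_{T*1} ⌊D/T_i⌋ C_i)/M`, so that the left-hand side is `A/D`. Up to time `t ≤ D` a task
of `T*2` is released once, and a task of `T*1` is released `⌊D/T_i⌋` times plus once more if
`g_i < t`; hence failure of the test at `t` gives `t < A + (∑_{g_i < t} C_i)/M`. Applied at `t = g_i`
this says each `g_i` lies below the demand released strictly before it. Processing the tasks of `T*1`
in increasing order of `g_i`, the job released at `g_i` adds `C_i/M ≤ U_i g_i/M`, i.e. at most the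
fraction `U_i/M` of the demand accumulated so far, so the total demand is at most `A·∏(1 + U_i/M)`.
Failure at `t = D` then gives `D < A·∏(1 + U_i/M)`.
-/

open Finset

theorem add_sum_le_mul_prod_one_add {ι : Type*} (g c u : ι → ℝ) (A : ℝ) (s : Finset ι)
    (hc : ∀ i ∈ s, 0 ≤ c i) (hu : ∀ i ∈ s, 0 ≤ u i) (hcu : ∀ i ∈ s, c i ≤ u i * g i)
    (hg : ∀ i ∈ s, g i ≤ A + ∑ j ∈ s with g j < g i, c j) :
    A + ∑ i ∈ s, c i ≤ A * ∏ i ∈ s, (1 + u i) := by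
  classical
  induction s using Finset.induction_on_max_value g with
  | empty => simp
  | insert a s ha hmax ih =>
    have hsub : ∀ i ∈ s, i ∈ insert a s := fun i hi => mem_insert_of_mem hi
    have ih : A + ∑ i ∈ s, c i ≤ A * ∏ i ∈ s, (1 + u i) := by
      refine ih (fun i hi => hc i (hsub i hi)) (fun i hi => hu i (hsub i hi))
        (fun i hi => hcu i (hsub i hi)) fun i hi => ?_
      have := hg i (hsub i hi)
      rwa [filter_insert, if_neg (hmax i hi).not_gt] at this
    have hga : g a ≤ A + ∑ i ∈ s, c i := by
      have := hg a (mem_insert_self a s)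
      rw [filter_insert, if_neg (lt_irrefl _)] at this
      exact this.trans <| by
        gcongr A + ?_
        exact sum_le_sum_of_subset_of_nonneg (filter_subset _ s) fun i hi _ => hc i (hsub i hi)
    have hua := hu a (mem_insert_self a s)
    calc A + ∑ i ∈ insert a s, c i = A + ∑ i ∈ s, c i + c a := by rw [sum_insert ha]; ring
      _ ≤ A * ∏ i ∈ s, (1 + u i) + u a * (A * ∏ i ∈ s, (1 + u i)) := by
        gcongr
        calc c a ≤ u a * g a := hcu a (mem_insert_self a s)
          _ ≤ u a * (A + ∑ i ∈ s, c i) := by gcongr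
          _ ≤ u a * (A * ∏ i ∈ s, (1 + u i)) := by gcongr
      _ = A * ∏ i ∈ insert a s, (1 + u i) := by rw [prod_insert ha]; ring

section FloorCeil

variable {t T D : ℝ}

theorem ceil_div_eq_one (hT : 0 < T) (ht : 0 < t) (htT : t ≤ T) : ⌈t / T⌉ = 1 := by
  rw [Int.ceil_eq_iff]
  exact ⟨by simpa using div_pos ht hT, by simpa using (div_le_one hT).2 htT⟩

theorem ceil_div_le_floor_div_add_ite (hT : 0 < T) (htD : t ≤ D) :
    (⌈t / T⌉ : ℝ) ≤ ⌊D / T⌋ + if ⌊D / T⌋ * T < t then 1 else 0 := by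
  split_ifs with h
  · have : t / T ≤ ((⌊D / T⌋ + 1 : ℤ) : ℝ) := by
      push_cast
      exact (div_le_div_of_nonneg_right htD hT.le).trans (Int.lt_floor_add_one _).le
    exact_mod_cast Int.ceil_le.2 this
  · have : t / T ≤ ((⌊D / T⌋ : ℤ) : ℝ) := (div_le_iff₀ hT).2 (not_lt.1 h)
    simpa using Int.ceil_le.2 this

theorem one_le_floor_div (hT : 0 < T) (hTD : T ≤ D) : (1 : ℝ) ≤ ⌊D / T⌋ := by
  exact_mod_cast Int.le_floor.2 (by simpa using (one_le_div hT).2 hTD)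

theorem floor_div_mul_le (hT : 0 < T) : ⌊D / T⌋ * T ≤ D :=
  (mul_le_mul_of_nonneg_right (Int.floor_le _) hT.le).trans_eq (div_mul_cancel₀ D hT.ne')

theorem floor_div_mul_pos (hT : 0 < T) (hTD : T ≤ D) : 0 < ⌊D / T⌋ * T :=
  mul_pos (zero_lt_one.trans_le (one_le_floor_div hT hTD)) hT

theorem div_mul_floor_div_mul (C : ℝ) (hT : T ≠ 0) : C / T * (⌊D / T⌋ * T) = ⌊D / T⌋ * C := by
  field_simp

end FloorCeil

section Demand

variable {ι : Type*} (s : Finset ι) (C T : ι → ℝ) {D : ℝ}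

theorem sum_ceil_div_mul_le {t : ℝ} (hT : ∀ i ∈ s, 0 < T i) (hC : ∀ i ∈ s, 0 ≤ C i)
    (htD : t ≤ D) :
    ∑ i ∈ s, (⌈t / T i⌉ : ℝ) * C i ≤
      ∑ i ∈ s, (⌊D / T i⌋ : ℝ) * C i + ∑ i ∈ s with ⌊D / T i⌋ * T i < t, C i := by
  rw [sum_filter, ← sum_add_distrib]
  gcongr with i hi
  calc (⌈t / T i⌉ : ℝ) * C i ≤ (⌊D / T i⌋ + if ⌊D / T i⌋ * T i < t then 1 else 0) * C i :=
        mul_le_mul_of_nonneg_right (ceil_div_le_floor_div_add_ite (hT i hi) htD) (hC i hi)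
    _ = _ := by split_ifs <;> ring

theorem sum_ceil_div_mul_le_demand {t : ℝ} (hT : ∀ i ∈ s, 0 < T i) (hC : ∀ i ∈ s, 0 ≤ C i)
    (ht : 0 < t) (htD : t ≤ D) :
    ∑ i ∈ s, (⌈t / T i⌉ : ℝ) * C i ≤
      ∑ i ∈ s with D ≤ T i, C i + ∑ i ∈ s with T i < D, (⌊D / T i⌋ : ℝ) * C i
        + ∑ i ∈ {i ∈ s | T i < D} with ⌊D / T i⌋ * T i < t, C i := by
  have hshort : ∑ i ∈ s with D ≤ T i, (⌈t / T i⌉ : ℝ) * C i = ∑ i ∈ s with D ≤ T i, C i :=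
    sum_congr rfl fun i hi => by
      obtain ⟨his, hDT⟩ := mem_filter.1 hi
      simp [ceil_div_eq_one (hT i his) ht (htD.trans hDT)]
  have hlong := sum_ceil_div_mul_le {i ∈ s | T i < D} C T (fun i hi => hT i (mem_filter.1 hi).1)
    (fun i hi => hC i (mem_filter.1 hi).1) htD
  rw [← sum_filter_add_sum_filter_not s (T · < D)]
  simp only [not_lt, hshort]
  linarith

theorem lt_mul_prod_one_add_of_forall_lt {Ck M : ℝ} (hM : 0 ≤ M) (hD : 0 < D)
    (hT : ∀ i ∈ s, 0 < T i) (hC : ∀ i ∈ s, 0 ≤ C i)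
    (hfail : ∀ t, 0 < t → t ≤ D → t < Ck + (∑ i ∈ s, (⌈t / T i⌉ : ℝ) * C i) / M) :
    D < (Ck + (∑ i ∈ s with D ≤ T i, C i + ∑ i ∈ s with T i < D, (⌊D / T i⌋ : ℝ) * C i) / M)
      * ∏ i ∈ s with T i < D, (1 + C i / T i / M) := by
  set T1 := {i ∈ s | T i < D}
  set A := Ck + (∑ i ∈ s with D ≤ T i, C i + ∑ i ∈ T1, (⌊D / T i⌋ : ℝ) * C i) / M with hA
  set g : ι → ℝ := fun i => ⌊D / T i⌋ * T i
  have key : ∀ t, 0 < t → t ≤ D → t < A + (∑ i ∈ T1 with g i < t, C i) / M :=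
    fun t ht htD => (hfail t ht htD).trans_le <| by
      rw [hA, add_assoc, ← add_div]
      gcongr
      exact sum_ceil_div_mul_le_demand s C T hT hC ht htD
  have hT1 : ∀ i ∈ T1, 0 < T i ∧ T i < D ∧ 0 ≤ C i := fun i hi =>
    have := mem_filter.1 hi; ⟨hT i this.1, this.2, hC i this.1⟩
  have hdemand : A + ∑ i ∈ T1, C i / M ≤ A * ∏ i ∈ T1, (1 + C i / T i / M) := by
    refine add_sum_le_mul_prod_one_add g (C · / M) (fun i => C i / T i / M) A T1
      (fun i hi => div_nonneg (hT1 i hi).2.2 hM)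
      (fun i hi => div_nonneg (div_nonneg (hT1 i hi).2.2 (hT1 i hi).1.le) hM)
      (fun i hi => ?_) fun i hi => ?_
    · obtain ⟨hTi, hTD, hCi⟩ := hT1 i hi
      rw [div_mul_eq_mul_div, div_mul_floor_div_mul _ hTi.ne']
      gcongr
      exact le_mul_of_one_le_left hCi (one_le_floor_div hTi hTD.le)
    · obtain ⟨hTi, hTD, -⟩ := hT1 i hi
      rw [← sum_div]
      exact (key (g i) (floor_div_mul_pos hTi hTD.le) (floor_div_mul_le hTi)).le
  calc D < A + (∑ i ∈ T1 with g i < D, C i) / M := key D hD le_rfl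
    _ ≤ A + ∑ i ∈ T1, C i / M := by
      rw [sum_div]
      gcongr A + ?_
      exact sum_le_sum_of_subset_of_nonneg (filter_subset _ T1) fun i hi _ =>
        div_nonneg (hT1 i hi).2.2 hM
    _ ≤ _ := hdemand

end Demand

theorem stmt_4_general
    (M k : ℕ)
    (C T : ℕ → ℝ) (Dk : ℝ)
    (hC : ∀ i ∈ Finset.Icc 1 k, 0 < C i)
    (hT : ∀ i ∈ Finset.Icc 1 (k - 1), 0 < T i)
    (hDk : 0 < Dk)
    (U : ℕ → ℝ) (hU : ∀ i, U i = C i / T i)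
    (T1 T2 : Finset ℕ)
    (hT1 : T1 = (Finset.Icc 1 (k - 1)).filter (fun i => T i < Dk))
    (hT2 : T2 = (Finset.Icc 1 (k - 1)).filter (fun i => Dk ≤ T i))
    (Ck' : ℝ) (hCk' : Ck' = C k + (∑ i ∈ T2, C i) / M)
    (hfail : ∀ t : ℝ, 0 < t → t ≤ Dk →
      C k + (∑ i ∈ Finset.Icc 1 (k - 1), (⌈t / T i⌉ : ℝ) * C i) / M > t) :
    Ck' / Dk + (∑ i ∈ T1, (⌊Dk / T i⌋ : ℝ) * T i * U i) / (M * Dk) >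
      1 / ∏ i ∈ T1, (1 + U i / M) := by
  subst hT1 hT2 hCk'
  simp only [hU]
  set s := Icc 1 (k - 1)
  have hCs : ∀ i ∈ s, 0 ≤ C i := fun i hi =>
    (hC i (Icc_subset_Icc_right (Nat.sub_le k 1) hi)).le
  have hbound := lt_mul_prod_one_add_of_forall_lt s C T (Nat.cast_nonneg M) hDk hT hCs hfail
  have hsum : ∑ i ∈ s with T i < Dk, (⌊Dk / T i⌋ : ℝ) * T i * (C i / T i) =
      ∑ i ∈ s with T i < Dk, (⌊Dk / T i⌋ : ℝ) * C i :=
    sum_congr rfl fun i hi => by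
      rw [mul_comm, div_mul_floor_div_mul _ (hT i (mem_filter.1 hi).1).ne']
  have hprod : 0 < ∏ i ∈ s with T i < Dk, (1 + C i / T i / M) :=
    prod_pos fun i hi => by
      have := hT i (mem_filter.1 hi).1
      have := hCs i (mem_filter.1 hi).1
      positivity
  have hlhs (x y z : ℝ) : (x + y / M) / Dk + z / (M * Dk) = (x + (y + z) / M) / Dk := by ring
  rwa [hsum, hlhs, gt_iff_lt, div_lt_iff₀ hprod, div_mul_eq_mul_div, one_lt_div hDk]

/-- Corollary 4 of the paper, in the form used in the proof of Theorem 5: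
if the averaged TDA test fails at every point `t ∈ (0, D_k]`, then the workload
`C_k'/D_k + (∑_{i∈T*1} ⌊D_k/T_i⌋ T_i U_i)/(M D_k)` exceeds `1/∏_{i∈T*1}(1 + U_i/M)`. -/
theorem stmt_4
    (M k : ℕ) (hM : 1 ≤ M) (hk : 1 ≤ k)
    (C T : ℕ → ℝ) (Dk : ℝ)
    (hC : ∀ i ∈ Finset.Icc 1 k, 0 < C i)
    (hT : ∀ i ∈ Finset.Icc 1 (k - 1), 0 < T i)
    (hDk : 0 < Dk)
    (U : ℕ → ℝ) (hU : ∀ i, U i = C i / T i)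
    (T1 T2 : Finset ℕ)
    (hT1 : T1 = (Finset.Icc 1 (k - 1)).filter (fun i => T i < Dk))
    (hT2 : T2 = (Finset.Icc 1 (k - 1)).filter (fun i => Dk ≤ T i))
    (Ck' : ℝ) (hCk' : Ck' = C k + (∑ i ∈ T2, C i) / M)
    (hfail : ∀ t : ℝ, 0 < t → t ≤ Dk →
      C k + (∑ i ∈ Finset.Icc 1 (k - 1), (⌈t / T i⌉ : ℝ) * C i) / M > t) :
    Ck' / Dk + (∑ i ∈ T1, (⌊Dk / T i⌋ : ℝ) * T i * U i) / (M * Dk) >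
      1 / ∏ i ∈ T1, (1 + U i / M) :=
  stmt_4_general M k C T Dk hC hT hDk U hU T1 T2 hT1 hT2 Ck' hCk' hfail
end

section
/- Let M ≥ 1 and k ≥ 1 be integers. For i = 1, …, k−1 let C_i > 0, T_i > 0 and D_i > 0 with D_i ≤ T_i and D_i ≤ D_k, and let C_k > 0 and D_k > 0; put U_i = C_i/T_i and dbf(τ_i, t) = max{0, ⌊(t − D_i)/T_i⌋ + 1}·C_i. Suppose that for every real t with 0 < t ≤ D_k one has M·C_k + Σ_{i=1}^{k−1} ⌈t/T_i⌉·C_i > M·t. Then max{ C_k/D_k, (Σ_{i=1}^{k−1} U_i)/M, (Σ_{i=1}^{k−1} dbf(τ_i, D_k))/(M·D_k) } > w, where w is the unique positive real satisfying w·e^w = 1/2 (w = W(0.5) ≈ 0.3517337, so 1/w ≈ 2.84306). -/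
/-!
Suppose all three quantities are at most `w` and put `d = D k`. As `D_i ≤ T_i` and `D_i ≤ d`,
at least `⌈d/(2T_i)⌉` jobs of `τ_i` have their deadlines by `d`, so
`∑ ⌈d/(2T_i)⌉ C_i ≤ w M d`; with `C_k ≤ w d` the failure of the test then says that the demand
released in `[d/2, t)`, `G t = ∑ (⌈t/T_i⌉ - ⌈d/(2T_i)⌉) C_i`, exceeds `M (t - 2 w d)` for
`t ∈ [2 w d, d]`. Weighting the jumps of `G` by `1/t`, each task contributes at most `U_i`, and
the weighted total is `∫_{d/2}^d G/t² + G(d)/d`. Comparing `G` with `M (t - 2 w d)⁺` bounds this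
from below, strictly, by `M log (1/(2w)) = M w`, contradicting `∑ U_i ≤ w M`.
-/

open Real Finset MeasureTheory intervalIntegral

lemma mem_Icc_of_mul_exp_eq_half {w : ℝ} (hw : w * exp w = 1 / 2) :
    w ∈ Set.Icc (1 / 3) (1 / 2) := by
  have hneg : exp (-w) = 2 * w := by
    rw [exp_neg, inv_eq_iff_eq_inv, ← one_div, eq_div_iff] <;> nlinarith [exp_pos w]
  have hlow : 1 / 3 ≤ w := by linarith [add_one_le_exp (-w)]
  exact ⟨hlow, by nlinarith [add_one_le_exp w]⟩

lemma log_one_div_two_mul_of_mul_exp_eq_half {w : ℝ} (hw : w * exp w = 1 / 2) :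
    log (1 / (2 * w)) = w := by
  have hw0 : w ≠ 0 := by rintro rfl; norm_num at hw
  rw [show 1 / (2 * w) = exp w by field_simp; linarith, log_exp]

lemma intervalIntegrable_div_sq_of_monotone {f : ℝ → ℝ} (hf : Monotone f) {a b : ℝ}
    (ha : 0 < a) (hab : a ≤ b) : IntervalIntegrable (fun t => f t / t ^ 2) volume a b := by
  have hsq : ContinuousOn (fun t : ℝ => (t ^ 2)⁻¹) (Set.uIcc a b) := by
    refine (continuousOn_pow 2).inv₀ fun t ht => ?_
    rw [Set.uIcc_of_le hab] at ht
    exact pow_ne_zero _ (ha.trans_le ht.1).ne'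
  simpa only [div_eq_mul_inv] using hf.intervalIntegrable.mul_continuousOn hsq

lemma integral_ite_lt_div_sq {a b c x : ℝ} (ha : 0 < a) (hac : a ≤ c) (hcb : c ≤ b) :
    ∫ t in a..b, (if c < t then x else 0) / t ^ 2 = x / c - x / b := by
  have hc : 0 < c := ha.trans_le hac
  have hind : (fun t : ℝ => (if c < t then x else 0) / t ^ 2)
      = (Set.Ioi c).indicator (fun t => x / t ^ 2) := by
    ext t
    by_cases h : c < t <;> simp [Set.indicator, h]
  rw [hind, integral_of_le (hac.trans hcb), setIntegral_indicator measurableSet_Ioi,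
    Set.Ioc_inter_Ioi, max_eq_right hac,
    ← integral_of_le hcb, integral_eq_sub_of_hasDerivAt (f := fun t => -x * t⁻¹)]
  · ring
  · intro t ht
    rw [Set.uIcc_of_le hcb] at ht
    have ht0 : t ≠ 0 := (hc.trans_le ht.1).ne'
    exact ((hasDerivAt_inv ht0).const_mul (-x)).congr_deriv (by field_simp)
  · exact intervalIntegrable_div_sq_of_monotone monotone_const hc hcb

lemma integral_max_sub_div_sq {a c d : ℝ} (hc : 0 < c) (hca : c ≤ a) (had : a ≤ d) :
    ∫ t in c..d, max 0 (t - a) / t ^ 2 = log (d / a) - 1 + a / d := by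
  have ha : 0 < a := hc.trans_le hca
  have hd : 0 < d := ha.trans_le had
  have hmono : Monotone fun t : ℝ => max 0 (t - a) := fun s t hst =>
    max_le_max_left 0 (sub_le_sub_right hst a)
  rw [← integral_add_adjacent_intervals (intervalIntegrable_div_sq_of_monotone hmono hc hca)
    (intervalIntegrable_div_sq_of_monotone hmono ha had)]
  have hleft : ∫ t in c..a, max 0 (t - a) / t ^ 2 = 0 := by
    rw [integral_congr (g := fun _ => 0) fun t ht => ?_, intervalIntegral.integral_zero]
    rw [Set.uIcc_of_le hca] at ht
    simp [ht.2]
  have hright :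
      ∫ t in a..d, max 0 (t - a) / t ^ 2 = (log d + a * d⁻¹) - (log a + a * a⁻¹) := by
    refine integral_eq_sub_of_hasDerivAt (f := fun t => log t + a * t⁻¹) (fun t ht => ?_)
      (intervalIntegrable_div_sq_of_monotone hmono ha had)
    rw [Set.uIcc_of_le had] at ht
    have ht0 : t ≠ 0 := (ha.trans_le ht.1).ne'
    refine ((hasDerivAt_log ht0).add ((hasDerivAt_inv ht0).const_mul a)).congr_deriv ?_
    rw [max_eq_right (by linarith [ht.1])]
    field_simp
    ring
  rw [hleft, hright, log_div hd.ne' ha.ne', mul_inv_cancel₀ ha.ne']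
  ring

lemma mul_log_div_lt_integral_div_sq_add_div {G : ℝ → ℝ} {M a c d : ℝ} (hc : 0 < c)
    (hca : c ≤ a) (had : a ≤ d) (hG : Monotone G) (hGc : 0 ≤ G c)
    (hGt : ∀ t ∈ Set.Icc a d, M * (t - a) < G t) :
    M * log (d / a) < (∫ t in c..d, G t / t ^ 2) + G d / d := by
  have hd : 0 < d := hc.trans_le (hca.trans had)
  have hmono : Monotone fun t : ℝ => max 0 (t - a) := fun s t hst =>
    max_le_max_left 0 (sub_le_sub_right hst a)
  have hpoint : ∀ t ∈ Set.Icc c d, M * (max 0 (t - a) / t ^ 2) ≤ G t / t ^ 2 := by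
    intro t ht
    have ht0 : 0 < t ^ 2 := pow_pos (hc.trans_le ht.1) 2
    rw [← mul_div_assoc]
    gcongr
    rcases le_total t a with hta | hta
    · rw [max_eq_left (by linarith), mul_zero]
      exact hGc.trans (hG ht.1)
    · rw [max_eq_right (by linarith)]
      exact (hGt t ⟨hta, ht.2⟩).le
  have hintegral : M * (log (d / a) - 1 + a / d) ≤ ∫ t in c..d, G t / t ^ 2 := by
    rw [← integral_max_sub_div_sq hc hca had, ← intervalIntegral.integral_const_mul]
    exact integral_mono_on (hca.trans had)
      ((intervalIntegrable_div_sq_of_monotone hmono hc (hca.trans had)).const_mul M)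
      (intervalIntegrable_div_sq_of_monotone hG hc (hca.trans had)) hpoint
  have hboundary : M * (1 - a / d) < G d / d := by
    rw [lt_div_iff₀ hd, mul_assoc, sub_mul, div_mul_cancel₀ _ hd.ne', one_mul]
    exact hGt d ⟨had, le_rfl⟩
  linarith

lemma monotone_ceil_div_sub_mul {C T : ℝ} (y : ℝ) (hC : 0 ≤ C) (hT : 0 < T) :
    Monotone fun t => ((⌈t / T⌉ : ℝ) - y) * C := fun s t hst =>
  mul_le_mul_of_nonneg_right (sub_le_sub_right (by gcongr) y) hC

lemma ceil_div_sub_ceil_div_mul_eq_sum_ite {T s t u : ℝ} (x : ℝ) (hT : 0 < T) (hst : s ≤ t)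
    (htu : t ≤ u) :
    ((⌈t / T⌉ : ℝ) - ⌈s / T⌉) * x
      = ∑ j ∈ Ico ⌈s / T⌉ ⌈u / T⌉, if (j : ℝ) * T < t then x else 0 := by
  have hfilter :
      (Ico ⌈s / T⌉ ⌈u / T⌉).filter (fun j : ℤ => (j : ℝ) * T < t) = Ico ⌈s / T⌉ ⌈t / T⌉ := by
    simp only [← lt_div_iff₀ hT, ← Int.lt_ceil]
    rw [Ico_filter_lt, min_eq_right (Int.ceil_mono (by gcongr))]
  have hle : ⌈s / T⌉ ≤ ⌈t / T⌉ := Int.ceil_mono (by gcongr)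
  rw [← sum_filter, hfilter, sum_const, Int.card_Ico, nsmul_eq_mul, ← Int.cast_natCast,
    Int.toNat_of_nonneg (by omega)]
  push_cast
  ring

/-- The left side is the sum of the jumps `C` of `t ↦ ⌈t/T⌉ C` at the points `j T ∈ [d/2, d)`,
weighted by `1/(j T)`; there are at most `⌈d/(2T)⌉` of them. -/
lemma integral_ceil_div_sub_mul_div_sq_add_le {C T d : ℝ} (hC : 0 ≤ C) (hT : 0 < T)
    (hd : 0 < d) :
    (∫ t in (d / 2)..d, ((⌈t / T⌉ : ℝ) - ⌈d / 2 / T⌉) * C / t ^ 2)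
      + ((⌈d / T⌉ : ℝ) - ⌈d / 2 / T⌉) * C / d ≤ C / T := by
  set q := ⌈d / 2 / T⌉
  set m := ⌈d / T⌉
  have hd2 : 0 < d / 2 := by positivity
  have hq1 : 1 ≤ q := Int.one_le_ceil_iff.mpr (by positivity)
  have hm2q : m ≤ 2 * q := Int.ceil_le.mpr (by
    push_cast
    linarith [Int.le_ceil (d / 2 / T), show d / T = 2 * (d / 2 / T) by ring])
  have hqm : q ≤ m := Int.ceil_mono (by gcongr; linarith)
  have hjump : ∀ j ∈ Ico q m, d / 2 ≤ (j : ℝ) * T ∧ (j : ℝ) * T ≤ d := by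
    intro j hj
    obtain ⟨hqj, hjm⟩ := mem_Ico.mp hj
    have hqj' : d / 2 / T ≤ j := (Int.le_ceil _).trans (by exact_mod_cast hqj)
    have hjm' : (j : ℝ) < d / T := Int.lt_ceil.mp hjm
    rw [div_le_iff₀ hT] at hqj'
    rw [lt_div_iff₀ hT] at hjm'
    exact ⟨hqj', hjm'.le⟩
  have hcard : (m : ℝ) - q = #(Ico q m) := by
    rw [Int.card_Ico, ← Int.cast_natCast, Int.toNat_of_nonneg (by omega)]
    push_cast
    ring
  have hintegral : ∫ t in (d / 2)..d, ((⌈t / T⌉ : ℝ) - q) * C / t ^ 2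
      = ∑ j ∈ Ico q m, (C / (j * T) - C / d) := by
    rw [integral_congr (g := fun t => ∑ j ∈ Ico q m, (if (j : ℝ) * T < t then C else 0) / t ^ 2)
      fun t ht => ?_]
    · rw [integral_finsetSum fun j _ => intervalIntegrable_div_sq_of_monotone
        (fun s t hst => by split_ifs <;> linarith) hd2 (by linarith)]
      exact sum_congr rfl fun j hj => integral_ite_lt_div_sq hd2 (hjump j hj).1 (hjump j hj).2
    · rw [Set.uIcc_of_le (by linarith)] at ht
      dsimp only
      rw [← sum_div, ← ceil_div_sub_ceil_div_mul_eq_sum_ite C hT ht.1 ht.2]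
  have hqT : 0 < (q : ℝ) * T := by positivity
  calc _ = ∑ j ∈ Ico q m, C / (j * T) := by
        rw [hintegral, sum_sub_distrib, sum_const, nsmul_eq_mul, hcard]
        ring
    _ ≤ ∑ j ∈ Ico q m, C / (q * T) := sum_le_sum fun j hj => by
        gcongr
        exact_mod_cast (mem_Ico.mp hj).1
    _ = ((m : ℝ) - q) * (C / (q * T)) := by rw [sum_const, nsmul_eq_mul, hcard]
    _ ≤ q * (C / (q * T)) := by
        gcongr
        linarith [show (m : ℝ) ≤ 2 * q by exact_mod_cast hm2q]
    _ = C / T := by field_simp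

lemma ceil_half_div_le_floor_sub_div_add_one {d D T : ℝ} (hT : 0 < T) (hDT : D ≤ T)
    (hDd : D ≤ d) :
    ⌈d / 2 / T⌉ ≤ ⌊(d - D) / T⌋ + 1 := by
  rcases le_or_gt D (d / 2) with hD | hD
  · calc ⌈d / 2 / T⌉ ≤ ⌈(d - D) / T⌉ := Int.ceil_mono (by gcongr; linarith)
      _ ≤ ⌊(d - D) / T⌋ + 1 := Int.ceil_le_floor_add_one _
  · have hceil : ⌈d / 2 / T⌉ ≤ 1 :=
      Int.ceil_le.mpr (by rw [div_le_iff₀ hT]; push_cast; linarith)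
    have hfloor : 0 ≤ ⌊(d - D) / T⌋ := Int.floor_nonneg.mpr (div_nonneg (by linarith) hT.le)
    omega

theorem stmt_6_general
    (M k : ℕ) (hM : 1 ≤ M)
    (C T D : ℕ → ℝ)
    (hC : ∀ i ∈ Finset.Icc 1 (k - 1), 0 < C i)
    (hT : ∀ i ∈ Finset.Icc 1 (k - 1), 0 < T i)
    (hconstr : ∀ i ∈ Finset.Icc 1 (k - 1), D i ≤ T i)
    (hDle : ∀ i ∈ Finset.Icc 1 (k - 1), D i ≤ D k)
    (hDk : 0 < D k)
    (U : ℕ → ℝ) (hU : ∀ i, U i = C i / T i)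
    (dbf : ℕ → ℝ → ℝ)
    (hdbf : ∀ i t, dbf i t = max 0 ((⌊(t - D i) / T i⌋ : ℝ) + 1) * C i)
    (hfail : ∀ t : ℝ, 0 < t → t ≤ D k →
      M * C k + (∑ i ∈ Finset.Icc 1 (k - 1), (⌈t / T i⌉ : ℝ) * C i) > M * t)
    (w : ℝ) (hwEq : w * Real.exp w = 1 / 2) :
    max (C k / D k)
      (max ((∑ i ∈ Finset.Icc 1 (k - 1), U i) / M)
        ((∑ i ∈ Finset.Icc 1 (k - 1), dbf i (D k)) / (M * D k))) > w := by
  by_contra hcon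
  rw [gt_iff_lt, not_lt, max_le_iff, max_le_iff] at hcon
  obtain ⟨hCkw, hUw, hdbfw⟩ := hcon
  set I := Finset.Icc 1 (k - 1)
  set d := D k
  have hM0 : (0 : ℝ) < M := by exact_mod_cast hM
  obtain ⟨hw_low, hw_high⟩ := mem_Icc_of_mul_exp_eq_half hwEq
  have hreleased : ∑ i ∈ I, (⌈d / 2 / T i⌉ : ℝ) * C i ≤ w * (M * d) := by
    have hdbf_le : ∑ i ∈ I, dbf i d ≤ w * (M * d) := (div_le_iff₀ (by positivity)).mp hdbfw
    refine (sum_le_sum fun i hi => ?_).trans (by simpa only [hdbf] using hdbf_le)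
    refine mul_le_mul_of_nonneg_right (le_max_of_le_right ?_) (hC i hi).le
    exact_mod_cast ceil_half_div_le_floor_sub_div_add_one (hT i hi) (hconstr i hi) (hDle i hi)
  let G : ℝ → ℝ := fun t => ∑ i ∈ I, ((⌈t / T i⌉ : ℝ) - ⌈d / 2 / T i⌉) * C i
  have hG : Monotone G := fun s t hst => sum_le_sum fun i hi =>
    monotone_ceil_div_sub_mul _ (hC i hi).le (hT i hi) hst
  have hGt : ∀ t ∈ Set.Icc (2 * w * d) d, M * (t - 2 * w * d) < G t := by
    intro t ht
    have hfail_t := hfail t (by nlinarith [ht.1]) ht.2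
    have hCk_le : C k ≤ w * d := (div_le_iff₀ hDk).mp hCkw
    simp only [G, sub_mul, sum_sub_distrib]
    nlinarith
  have hlower := mul_log_div_lt_integral_div_sq_add_div (c := d / 2) (by positivity)
    (by nlinarith) (by nlinarith) hG (by simp [G]) hGt
  have hupper : (∫ t in (d / 2)..d, G t / t ^ 2) + G d / d ≤ w * M := by
    simp only [G, sum_div]
    rw [integral_finsetSum fun i hi => intervalIntegrable_div_sq_of_monotone
      (monotone_ceil_div_sub_mul _ (hC i hi).le (hT i hi)) (by positivity) (by linarith),
      ← sum_add_distrib]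
    refine (sum_le_sum fun i hi =>
      integral_ceil_div_sub_mul_div_sq_add_le (hC i hi).le (hT i hi) hDk).trans ?_
    simpa only [hU] using (div_le_iff₀ hM0).mp hUw
  rw [show d / (2 * w * d) = 1 / (2 * w) by field_simp,
    log_one_div_two_mul_of_mul_exp_eq_half hwEq] at hlower
  linarith

/-- Arithmetic core of Theorem 5 of the paper: deadline-monotonic partitioning
with exact time-demand analysis has speedup factor `1/W(0.5) ≈ 2.84306` for
constrained-deadline sporadic task systems. Here `w = W(0.5)` is the unique
positive real with `w * exp w = 1/2`. -/
theorem stmt_6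
    (M k : ℕ) (hM : 1 ≤ M) (hk : 1 ≤ k)
    (C T D : ℕ → ℝ)
    (hC : ∀ i ∈ Finset.Icc 1 (k - 1), 0 < C i)
    (hT : ∀ i ∈ Finset.Icc 1 (k - 1), 0 < T i)
    (hD : ∀ i ∈ Finset.Icc 1 (k - 1), 0 < D i)
    (hconstr : ∀ i ∈ Finset.Icc 1 (k - 1), D i ≤ T i)
    (hDle : ∀ i ∈ Finset.Icc 1 (k - 1), D i ≤ D k)
    (hCk : 0 < C k) (hDk : 0 < D k)
    (U : ℕ → ℝ) (hU : ∀ i, U i = C i / T i)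
    (dbf : ℕ → ℝ → ℝ)
    (hdbf : ∀ i t, dbf i t = max 0 ((⌊(t - D i) / T i⌋ : ℝ) + 1) * C i)
    (hfail : ∀ t : ℝ, 0 < t → t ≤ D k →
      M * C k + (∑ i ∈ Finset.Icc 1 (k - 1), (⌈t / T i⌉ : ℝ) * C i) > M * t)
    (w : ℝ) (hw : 0 < w) (hwEq : w * Real.exp w = 1 / 2) :
    max (C k / D k)
      (max ((∑ i ∈ Finset.Icc 1 (k - 1), U i) / M)
        ((∑ i ∈ Finset.Icc 1 (k - 1), dbf i (D k)) / (M * D k))) > w :=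
  stmt_6_general M k hM C T D hC hT hconstr hDle hDk U hU dbf hdbf hfail w hwEq
end

section
/- Let M ≥ 1 and k ≥ 1 be integers. Let C_1, …, C_k ≥ 0, T_1, …, T_{k−1} > 0 and D_k > 0 be reals, and put U_i = C_i/T_i. Suppose {1, …, k−1} is partitioned into pairwise disjoint sets S_1, …, S_M, and for each m let S_m^1 = { i ∈ S_m : T_i < D_k } and S_m^2 = { i ∈ S_m : T_i ≥ D_k }; let T*1 = ∪_m S_m^1, T*2 = ∪_m S_m^2 and C_k' = C_k + (Σ_{i∈T*2} C_i)/M. If for every m ∈ {1, …, M} one has ((C_k + Σ_{i∈S_m^2} C_i)/D_k + 1)·∏_{i∈S_m^1} (U_i + 1) > 2, then (C_k'/D_k + 1)·∏_{i∈T*1} (U_i/M + 1) > 2. -/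
/-!
Multiplying the `M` failed per-processor bounds gives `2 ^ M < ∏ₘ fₘ · ∏ₘ gₘ`, where
`fₘ = (C_k + ∑_{S_m^2} C_i)/D_k + 1` and `gₘ = ∏_{S_m^1} (U_i + 1)`. AM-GM bounds `∏ₘ fₘ` by
the `M`-th power of their mean, which is `C_k'/D_k + 1`, and Bernoulli's inequality
`1 + U ≤ (1 + U/M)^M` bounds `∏ₘ gₘ = ∏_{T*1} (U_i + 1)` by `(∏_{T*1} (U_i/M + 1))^M`;
taking `M`-th roots concludes.
-/

open Finset

theorem Real.prod_le_mean_pow_card {ι : Type*} (s : Finset ι) (f : ι → ℝ)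
    (hf : ∀ i ∈ s, 0 ≤ f i) :
    ∏ i ∈ s, f i ≤ ((∑ i ∈ s, f i) / #s) ^ #s := by
  rcases s.eq_empty_or_nonempty with rfl | hs
  · simp
  have hcard : (#s : ℝ) ≠ 0 := by positivity
  have hprod : 0 ≤ ∏ i ∈ s, f i := prod_nonneg hf
  have hgm := Real.geom_mean_le_arith_mean_weighted s (fun _ => (#s : ℝ)⁻¹) f
    (fun _ _ => by positivity) (by simp [hcard]) hf
  rw [Real.finsetProd_rpow s f hf, ← mul_sum, inv_mul_eq_div] at hgm
  simpa [Real.rpow_inv_natCast_pow hprod hs.card_pos.ne'] using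
    pow_le_pow_left₀ (by positivity) hgm #s

theorem one_add_le_one_add_div_pow {x : ℝ} {n : ℕ} (hn : n ≠ 0) (hx : -2 ≤ x / n) :
    1 + x ≤ (1 + x / n) ^ n := by
  simpa [mul_div_cancel₀ x (Nat.cast_ne_zero.mpr hn)] using one_add_mul_le_pow hx n

theorem lt_mean_mul_of_forall_lt_mul {ι : Type*} {s : Finset ι} (hs : s.Nonempty)
    {f g : ι → ℝ} {c B : ℝ} (hc : 0 < c) (hg : ∀ i ∈ s, 0 ≤ g i)
    (hfg : ∀ i ∈ s, c < f i * g i) (hB : 0 ≤ B) (hgB : ∏ i ∈ s, g i ≤ B ^ #s) :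
    c < (∑ i ∈ s, f i) / #s * B := by
  have hf : ∀ i ∈ s, 0 ≤ f i := fun i hi =>
    (pos_of_mul_pos_left (hc.le.trans_lt (hfg i hi)) (hg i hi)).le
  have hmean : 0 ≤ (∑ i ∈ s, f i) / #s := div_nonneg (sum_nonneg hf) (Nat.cast_nonneg _)
  refine lt_of_pow_lt_pow_left₀ #s (mul_nonneg hmean hB) ?_
  calc c ^ #s = ∏ _i ∈ s, c := (prod_const c).symm
    _ < ∏ i ∈ s, f i * g i := prod_lt_prod_of_nonempty (fun _ _ => hc) hfg hs
    _ = (∏ i ∈ s, f i) * ∏ i ∈ s, g i := prod_mul_distrib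
    _ ≤ ((∑ i ∈ s, f i) / #s) ^ #s * B ^ #s :=
      mul_le_mul (Real.prod_le_mean_pow_card s f hf) hgB (prod_nonneg hg) (pow_nonneg hmean _)
    _ = _ := (mul_pow _ _ _).symm

theorem stmt_7_general
    (M k : ℕ) (hM : 1 ≤ M)
    (C T : ℕ → ℝ) (Dk : ℝ)
    (hC : ∀ i ∈ Finset.Icc 1 k, 0 ≤ C i)
    (hT : ∀ i ∈ Finset.Icc 1 (k - 1), 0 < T i)
    (U : ℕ → ℝ) (hU : ∀ i, U i = C i / T i)
    (S : ℕ → Finset ℕ)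
    (hSdisj : ∀ m ∈ Finset.Icc 1 M, ∀ m' ∈ Finset.Icc 1 M, m ≠ m' → Disjoint (S m) (S m'))
    (hSunion : (Finset.Icc 1 M).biUnion S = Finset.Icc 1 (k - 1))
    (S1 S2 : ℕ → Finset ℕ)
    (hS1 : ∀ m, S1 m = (S m).filter (fun i => T i < Dk))
    (hS2 : ∀ m, S2 m = (S m).filter (fun i => Dk ≤ T i))
    (T1 T2 : Finset ℕ)
    (hT1 : T1 = (Finset.Icc 1 M).biUnion S1)
    (hT2 : T2 = (Finset.Icc 1 M).biUnion S2)
    (Ck' : ℝ) (hCk' : Ck' = C k + (∑ i ∈ T2, C i) / M)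
    (hfail : ∀ m ∈ Finset.Icc 1 M,
      ((C k + ∑ i ∈ S2 m, C i) / Dk + 1) * ∏ i ∈ S1 m, (U i + 1) > 2) :
    (Ck' / Dk + 1) * ∏ i ∈ T1, (U i / M + 1) > 2 := by
  subst hT1 hT2 hCk'
  have hcard : #(Icc 1 M) = M := by simp
  have hS1_sub : ∀ m ∈ Icc 1 M, S1 m ⊆ Icc 1 (k - 1) := fun m hm =>
    hS1 m ▸ (filter_subset _ _).trans (hSunion ▸ subset_biUnion_of_mem S hm)
  have hU_nonneg : ∀ i ∈ Icc 1 (k - 1), 0 ≤ U i := fun i hi =>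
    hU i ▸ div_nonneg (hC i (Icc_subset_Icc_right (Nat.sub_le k 1) hi)) (hT i hi).le
  have hUM_nonneg : ∀ i ∈ (Icc 1 M).biUnion S1, 0 ≤ U i / M := fun i hi =>
    div_nonneg (hU_nonneg i (biUnion_subset.mpr hS1_sub hi)) M.cast_nonneg
  have hS_disj : (Icc 1 M : Set ℕ).PairwiseDisjoint S := hSdisj
  have hmean : (∑ m ∈ Icc 1 M, ((C k + ∑ i ∈ S2 m, C i) / Dk + 1)) / #(Icc 1 M) =
      (C k + (∑ i ∈ (Icc 1 M).biUnion S2, C i) / M) / Dk + 1 := by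
    rw [sum_biUnion (hS_disj.mono fun m => hS2 m ▸ filter_subset _ _), hcard]
    simp only [sum_add_distrib, ← sum_div, sum_const, hcard, nsmul_eq_mul]
    field_simp
  have hbernoulli : ∏ m ∈ Icc 1 M, ∏ i ∈ S1 m, (U i + 1) ≤
      (∏ i ∈ (Icc 1 M).biUnion S1, (U i / M + 1)) ^ #(Icc 1 M) := by
    rw [← prod_biUnion (hS_disj.mono fun m => hS1 m ▸ filter_subset _ _), hcard, ← prod_pow]
    refine prod_le_prod (fun i hi => ?_) fun i hi => ?_
    · linarith [hU_nonneg i (biUnion_subset.mpr hS1_sub hi)]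
    · simpa only [add_comm] using
        one_add_le_one_add_div_pow (by omega) (by linarith [hUM_nonneg i hi])
  rw [← hmean]
  exact lt_mean_mul_of_forall_lt_mul (nonempty_Icc.mpr hM) two_pos
    (fun m hm => prod_nonneg fun i hi => by linarith [hU_nonneg i (hS1_sub m hm hi)]) hfail
    (prod_nonneg fun i hi => by linarith [hUM_nonneg i hi]) hbernoulli

/-- The contrapositive form proved in Theorem 6 of the paper: if task `τ_k`
fails the hyperbolic schedulability bound on every one of the `M` processors,
then the combined hyperbolic condition is also violated. -/
theorem stmt_7
    (M k : ℕ) (hM : 1 ≤ M) (hk : 1 ≤ k)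
    (C T : ℕ → ℝ) (Dk : ℝ)
    (hC : ∀ i ∈ Finset.Icc 1 k, 0 ≤ C i)
    (hT : ∀ i ∈ Finset.Icc 1 (k - 1), 0 < T i)
    (hDk : 0 < Dk)
    (U : ℕ → ℝ) (hU : ∀ i, U i = C i / T i)
    (S : ℕ → Finset ℕ)
    (hSdisj : ∀ m ∈ Finset.Icc 1 M, ∀ m' ∈ Finset.Icc 1 M, m ≠ m' → Disjoint (S m) (S m'))
    (hSunion : (Finset.Icc 1 M).biUnion S = Finset.Icc 1 (k - 1))
    (S1 S2 : ℕ → Finset ℕ)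
    (hS1 : ∀ m, S1 m = (S m).filter (fun i => T i < Dk))
    (hS2 : ∀ m, S2 m = (S m).filter (fun i => Dk ≤ T i))
    (T1 T2 : Finset ℕ)
    (hT1 : T1 = (Finset.Icc 1 M).biUnion S1)
    (hT2 : T2 = (Finset.Icc 1 M).biUnion S2)
    (Ck' : ℝ) (hCk' : Ck' = C k + (∑ i ∈ T2, C i) / M)
    (hfail : ∀ m ∈ Finset.Icc 1 M,
      ((C k + ∑ i ∈ S2 m, C i) / Dk + 1) * ∏ i ∈ S1 m, (U i + 1) > 2) :
    (Ck' / Dk + 1) * ∏ i ∈ T1, (U i / M + 1) > 2 :=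
  stmt_7_general M k hM C T Dk hC hT U hU S hSdisj hSunion S1 S2 hS1 hS2 T1 T2 hT1 hT2 Ck' hCk'
    hfail
end

section
/- Let f be the unique real in (0,1) satisfying ln(1/f) = f/2. For each positive integer ℓ define g_ℓ(t) = 0 if t < ℓ·f, g_ℓ(t) = (t − ℓ·f)/ℓ if ℓ·f ≤ t < ℓ, and g_ℓ(t) = 1 − f if t ≥ ℓ, and define G(t) = 1.5·f − 1 + Σ_{ℓ=1}^∞ g_ℓ(t). Then for every positive integer ℓ, G(ℓ) = 1.5·f − 1 + ℓ − ⌊ℓ/f⌋·f + Σ_{i=ℓ+1}^{⌊ℓ/f⌋} ℓ/i. -/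
/-!
At `t ≥ 0` only the finitely many terms with `ℓ f ≤ t`, i.e. `ℓ ≤ ⌊t/f⌋`, are nonzero. Among
them, those with `ℓ ≤ ⌊t⌋` are saturated at `1 - f`, while the remaining ones,
`⌊t⌋ < ℓ ≤ ⌊t/f⌋`, lie on their ramp and contribute `t/ℓ - f`. Summing the two blocks gives
`⌊t⌋ - ⌊t/f⌋ f + ∑_{i=⌊t⌋+1}^{⌊t/f⌋} t/i`, which at `t = ℓ` is the claimed identity.
-/

open Finset

noncomputable section

/-- The paper's `g_ℓ(t)`. -/
def demandRamp (f : ℝ) (ℓ : ℕ) (t : ℝ) : ℝ :=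
  if t < ℓ * f then 0 else if t < ℓ then (t - ℓ * f) / ℓ else 1 - f

section demandRamp

variable {f t : ℝ} {ℓ : ℕ}

theorem demandRamp_of_lt_mul (h : t < ℓ * f) : demandRamp f ℓ t = 0 := if_pos h

theorem demandRamp_of_mul_le_of_lt (hℓ : 0 < ℓ) (h₁ : ℓ * f ≤ t) (h₂ : t < ℓ) :
    demandRamp f ℓ t = t / ℓ - f := by
  have hℓ' : (ℓ : ℝ) ≠ 0 := by positivity
  rw [demandRamp, if_neg h₁.not_gt, if_pos h₂]
  field_simp

theorem demandRamp_of_le (hf1 : f ≤ 1) (h : ℓ ≤ t) : demandRamp f ℓ t = 1 - f := by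
  have hℓf : ℓ * f ≤ t :=
    (mul_le_of_le_one_right (Nat.cast_nonneg ℓ) hf1).trans h
  rw [demandRamp, if_neg hℓf.not_gt, if_neg h.not_gt]

theorem tsum_demandRamp_succ (hf0 : 0 < f) (hf1 : f ≤ 1) (ht : 0 ≤ t) :
    ∑' k : ℕ, demandRamp f (k + 1) t =
      ⌊t⌋₊ - ⌊t / f⌋₊ * f + ∑ i ∈ Icc (⌊t⌋₊ + 1) ⌊t / f⌋₊, t / i := by
  set M := ⌊t⌋₊
  set N := ⌊t / f⌋₊
  have htf : 0 ≤ t / f := by positivity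
  have hMN : M ≤ N := Nat.floor_mono (le_div_self ht hf0 hf1)
  have hmul_le {m : ℕ} (hm : m ≤ N) : m * f ≤ t := by
    rwa [← le_div_iff₀ hf0, ← Nat.le_floor_iff htf]
  have hvanish : ∀ k ∉ range N, demandRamp f (k + 1) t = 0 := by
    intro k hk
    have hNk : N < k + 1 := by grind
    rw [Nat.floor_lt htf, div_lt_iff₀ hf0] at hNk
    exact demandRamp_of_lt_mul hNk
  have hlow : ∀ k ∈ range M, demandRamp f (k + 1) t = 1 - f := fun k hk =>
    demandRamp_of_le hf1 ((Nat.le_floor_iff ht).mp (mem_range.mp hk))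
  have hmid : ∀ k ∈ Ico M N, demandRamp f (k + 1) t = t / (k + 1 : ℕ) - f := by
    intro k hk
    rw [mem_Ico] at hk
    exact demandRamp_of_mul_le_of_lt k.succ_pos (hmul_le hk.2)
      ((Nat.floor_lt ht).mp (Nat.lt_succ_of_le hk.1))
  have hshift : ∑ k ∈ Ico M N, t / (k + 1 : ℕ) = ∑ i ∈ Icc (M + 1) N, t / i := by
    rw [sum_Ico_add' (fun i : ℕ => t / i), Ico_add_one_right_eq_Icc]
  rw [tsum_eq_sum hvanish, ← sum_range_add_sum_Ico _ hMN, sum_congr rfl hlow,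
    sum_const, card_range, sum_congr rfl hmid, sum_sub_distrib, hshift, sum_const,
    Nat.card_Ico, nsmul_eq_mul, nsmul_eq_mul, Nat.cast_sub hMN]
  ring

end demandRamp

end

theorem stmt_14_general
    (f : ℝ) (hf0 : 0 < f) (hf1 : f < 1)
    (g : ℕ → ℝ → ℝ)
    (hg : ∀ ℓ : ℕ, 1 ≤ ℓ → ∀ t : ℝ,
      g ℓ t = if t < ℓ * f then 0 else if t < ℓ then (t - ℓ * f) / ℓ else 1 - f)
    (G : ℝ → ℝ)
    (hG : ∀ t : ℝ, G t = 1.5 * f - 1 + ∑' ℓ : ℕ, g (ℓ + 1) t) :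
    ∀ ℓ : ℕ, 1 ≤ ℓ →
      G ℓ = 1.5 * f - 1 + ℓ - (⌊(ℓ : ℝ) / f⌋ : ℝ) * f +
        ∑ i ∈ Finset.Icc (ℓ + 1) (⌊(ℓ : ℝ) / f⌋).toNat, (ℓ : ℝ) / i := by
  intro ℓ _
  have hg' : ∀ k : ℕ, g (k + 1) ℓ = demandRamp f (k + 1) ℓ := fun k =>
    hg (k + 1) k.succ_pos ℓ
  have hsum := tsum_demandRamp_succ hf0 hf1.le (Nat.cast_nonneg ℓ)
  rw [Nat.floor_natCast, natCast_floor_eq_intCast_floor (by positivity)] at hsum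
  rw [hG, tsum_congr hg', hsum, Int.floor_toNat]
  ring

/-- Identity (density-total-sharp) in Appendix A of the paper:
`G(ℓ) = 1.5f − 1 + ℓ − ⌊ℓ/f⌋f + ∑_{i=ℓ+1}^{⌊ℓ/f⌋} ℓ/i` for every positive
integer `ℓ`, where `f ∈ (0,1)` is the unique root of `ln(1/f) = f/2`. -/
theorem stmt_14
    (f : ℝ) (hf0 : 0 < f) (hf1 : f < 1)
    (hf : Real.log (1 / f) = f / 2)
    (g : ℕ → ℝ → ℝ)
    (hg : ∀ ℓ : ℕ, 1 ≤ ℓ → ∀ t : ℝ,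
      g ℓ t = if t < ℓ * f then 0 else if t < ℓ then (t - ℓ * f) / ℓ else 1 - f)
    (G : ℝ → ℝ)
    (hG : ∀ t : ℝ, G t = 1.5 * f - 1 + ∑' ℓ : ℕ, g (ℓ + 1) t) :
    ∀ ℓ : ℕ, 1 ≤ ℓ →
      G ℓ = 1.5 * f - 1 + ℓ - (⌊(ℓ : ℝ) / f⌋ : ℝ) * f +
        ∑ i ∈ Finset.Icc (ℓ + 1) (⌊(ℓ : ℝ) / f⌋).toNat, (ℓ : ℝ) / i :=
  stmt_14_general f hf0 hf1 g hg G hG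
end

section
/- Let f be the unique real in (0,1) satisfying ln(1/f) = f/2. For each positive integer ℓ define g_ℓ(t) = 0 if t < ℓ·f, g_ℓ(t) = (t − ℓ·f)/ℓ if ℓ·f ≤ t < ℓ, and g_ℓ(t) = 1 − f if t ≥ ℓ, and define G(t) = 1.5·f − 1 + Σ_{ℓ=1}^∞ g_ℓ(t). Then for every integer ℓ ≥ 5, G(ℓ+1)/(ℓ+1) > G(ℓ)/ℓ. -/
/-!
For a natural number `n` put `m = ⌊n/f⌋` and `m' = ⌊(n+1)/f⌋`. Only the indices `j ≤ m`
contribute to `G n`: those with `j ≤ n` give `1 - f`, those with `n < j ≤ m` give `n/j - f`.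
In `n G(n+1) - (n+1) G(n)` the first kind cancels and every `j` with `n+1 < j ≤ m` contributes `f`,
which leaves the gap
  `1 - 1.5 f - n + m f + n ∑_{m < j ≤ m'} ((n+1)/j - f)`,
where `m' = m + 1` or `m' = m + 2` because `1 < 1/f < 2`. In the variable `y = f (m+1)` both
versions of the gap are convex, they agree at `y = n + 1 - f` (which is exactly where `m'` switches
from `m + 2` to `m + 1`), and their common value there is positive as long as `f < 12/17`. For
`2/3 < f < 12/17` and `n ≥ 5` the first version increases for `y ≥ n + 1 - f` and the second one
decreases for `y ≤ n + 1 - f`. Finally `f exp(f/2) = 1` and `x ↦ x exp(x/2)` is increasing, which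
puts `f` in `(2/3, 12/17)`.
-/

open Real Finset

lemma mul_exp_half_eq_one_of_log_one_div {f : ℝ} (hf0 : 0 < f) (hf : log (1 / f) = f / 2) :
    f * exp (f / 2) = 1 := by
  rw [one_div, log_inv, neg_eq_iff_eq_neg] at hf
  nth_rw 1 [← exp_log hf0]
  rw [← exp_add, hf, neg_add_cancel, exp_zero]

lemma mul_exp_half_strictMonoOn : StrictMonoOn (fun x : ℝ ↦ x * exp (x / 2)) (Set.Ici 0) :=
  fun x hx _ _ hxy ↦
    mul_lt_mul hxy (exp_le_exp.2 (by linarith)) (exp_pos _) (by linarith [Set.mem_Ici.1 hx])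

lemma mem_Ioo_of_mul_exp_half_eq_one {f : ℝ} (hf0 : 0 < f) (hf : f * exp (f / 2) = 1) :
    f ∈ Set.Ioo (2 / 3) (12 / 17) := by
  have hlo : (2 / 3 : ℝ) * exp ((2 / 3) / 2) < 1 := by
    have := exp_bound_div_one_sub_of_interval' (x := 1 / 3) (by norm_num) (by norm_num)
    norm_num at this ⊢
    linarith
  have hhi : 1 < (12 / 17 : ℝ) * exp ((12 / 17) / 2) := by
    have := sum_le_exp_of_nonneg (x := 6 / 17) (by norm_num) 4
    norm_num [sum_range_succ, Nat.factorial] at this ⊢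
    linarith
  rw [← hf] at hlo hhi
  exact ⟨(mul_exp_half_strictMonoOn.lt_iff_lt (by norm_num) hf0.le).1 hlo,
    (mul_exp_half_strictMonoOn.lt_iff_lt hf0.le (by norm_num)).1 hhi⟩

lemma tsum_demand_natCast {f : ℝ} (hf0 : 0 < f) (hf1 : f ≤ 1) {g : ℕ → ℝ → ℝ}
    (hg : ∀ ℓ : ℕ, 1 ≤ ℓ → ∀ t : ℝ,
      g ℓ t = if t < ℓ * f then 0 else if t < ℓ then (t - ℓ * f) / ℓ else 1 - f)
    (n : ℕ) :
    ∑' k : ℕ, g (k + 1) n = n * (1 - f) + ∑ j ∈ Ioc n ⌊(n : ℝ) / f⌋₊, ((n : ℝ) / j - f) := by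
  set m := ⌊(n : ℝ) / f⌋₊
  have hnm : n ≤ m :=
    Nat.le_floor <| (le_div_iff₀ hf0).2 <| by nlinarith [n.cast_nonneg (α := ℝ)]
  have hzero : ∀ k ∉ range m, g (k + 1) n = 0 := by
    intro k hk
    have hlt : (n : ℝ) / f < k + 1 := (Nat.lt_floor_add_one _).trans_le <| by
      exact_mod_cast Nat.succ_le_succ (not_lt.1 (mem_range.not.1 hk))
    rw [hg _ k.succ_pos, if_pos (by push_cast; exact (div_lt_iff₀ hf0).1 hlt)]
  rw [tsum_eq_sum hzero, ← sum_range_add_sum_Ico _ hnm]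
  congr 1
  · rw [sum_congr rfl (g := fun _ ↦ 1 - f), sum_const, card_range, nsmul_eq_mul]
    intro k hk
    have hkn : (k : ℝ) + 1 ≤ n := by exact_mod_cast mem_range.1 hk
    rw [hg _ k.succ_pos, if_neg (by push_cast; nlinarith), if_neg (by push_cast; linarith)]
  · rw [← Ico_add_one_add_one_eq_Ioc, ← sum_Ico_add']
    refine sum_congr rfl fun k hk ↦ ?_
    obtain ⟨hnk, hkm⟩ := mem_Ico.1 hk
    have hkf : ((k : ℝ) + 1) * f ≤ n := (le_div_iff₀ hf0).1 <|
      (by exact_mod_cast hkm : (k : ℝ) + 1 ≤ m).trans (Nat.floor_le (by positivity))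
    have hnk' : (n : ℝ) < k + 1 := by exact_mod_cast Nat.lt_succ_of_le hnk
    rw [hg _ k.succ_pos, if_neg (by push_cast; linarith), if_pos (by push_cast; linarith)]
    push_cast
    field_simp

lemma mul_sum_Ioc_sub_mul_sum_Ioc (f : ℝ) {n m m' : ℕ} (hnm : n < m) (hmm' : m ≤ m') :
    n * ∑ j ∈ Ioc (n + 1) m', (((n : ℝ) + 1) / j - f) -
        (n + 1) * ∑ j ∈ Ioc n m, ((n : ℝ) / j - f) =
      m * f - n + n * ∑ j ∈ Ioc m m', (((n : ℝ) + 1) / j - f) := by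
  rw [← sum_Ioc_consecutive _ hnm hmm', ← sum_Ioc_consecutive _ (by omega : n ≤ n + 1) hnm,
    Nat.Ioc_succ_singleton, sum_singleton]
  have hcommon : n * ∑ j ∈ Ioc (n + 1) m, (((n : ℝ) + 1) / j - f) -
      (n + 1) * ∑ j ∈ Ioc (n + 1) m, ((n : ℝ) / j - f) = (m - (n + 1)) * f := by
    rw [mul_sum, mul_sum, ← sum_sub_distrib]
    simp_rw [show ∀ j : ℕ, (n : ℝ) * ((n + 1) / j - f) - (n + 1) * (n / j - f) = f from
      fun j ↦ by ring]
    rw [sum_const, Nat.card_Ioc, nsmul_eq_mul, Nat.cast_sub hnm]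
    push_cast
    ring
  have hsingle : ((n : ℝ) + 1) * (n / (n + 1 : ℕ) - f) = n - (n + 1) * f := by
    push_cast
    field_simp
  linear_combination hcommon - hsingle

section Floor

variable {t f : ℝ}

lemma floor_add_one_div_eq_add_one (ht : 0 ≤ t) (hf0 : 0 < f) (hf1 : f ≤ 1)
    (h : (t + 1) / f < ⌊t / f⌋₊ + 2) : ⌊(t + 1) / f⌋₊ = ⌊t / f⌋₊ + 1 := by
  have hinv : 1 ≤ 1 / f := (le_div_iff₀ hf0).2 (by linarith)
  have hsplit : (t + 1) / f = t / f + 1 / f := add_div _ _ _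
  rw [Nat.floor_eq_iff (by positivity)]
  push_cast
  constructor
  · linarith [Nat.floor_le (div_nonneg ht hf0.le)]
  · linarith

lemma floor_add_one_div_eq_add_two (ht : 0 ≤ t) (hf : 1 / 2 < f)
    (h : ⌊t / f⌋₊ + 2 ≤ (t + 1) / f) : ⌊(t + 1) / f⌋₊ = ⌊t / f⌋₊ + 2 := by
  have hf0 : 0 < f := by linarith
  have hinv : 1 / f < 2 := (div_lt_iff₀ hf0).2 (by linarith)
  have hsplit : (t + 1) / f = t / f + 1 / f := add_div _ _ _
  rw [Nat.floor_eq_iff (by positivity)]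
  push_cast
  constructor
  · linarith
  · linarith [Nat.lt_floor_add_one (t / f)]

end Floor

section Gap

variable {f n m : ℝ}

/-- `n + 1 - f` times the common value of the two gaps of `gap_pos_of_lt` and `gap_pos_of_le` at
`f (m + 1) = n + 1 - f`. At `n = 5` it is `8.5 (f - 12/17) (f - 2)`. -/
lemma gap_at_boundary_pos (hf : f < 12 / 17) (hn : 5 ≤ n) :
    0 < (n + 1 - f) * (2 - 3.5 * f) + n * f ^ 2 := by
  nlinarith [mul_pos (by linarith : (0 : ℝ) < 12 / 17 - f) (by linarith : (0 : ℝ) < 2 - f),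
    mul_nonneg (by linarith : (0 : ℝ) ≤ n - 5) (by nlinarith : (0 : ℝ) ≤ f ^ 2 - 3.5 * f + 2)]

lemma gap_pos_of_lt (hf : 2 / 3 < f) (hf' : f < 12 / 17) (hn : 5 ≤ n)
    (hm : (n + 1) / f < m + 2) :
    0 < 1 - 1.5 * f - n + m * f + n * ((n + 1) / (m + 1) - f) := by
  have hf0 : 0 < f := by linarith
  set p := n + 1 - f
  set y := f * (m + 1)
  have hp : 0 < p := by linarith
  have hpy : p < y := by
    rw [div_lt_iff₀ hf0] at hm
    linarith
  have hy : 0 < y := hp.trans hpy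
  have hm1 : m + 1 ≠ 0 := (pos_of_mul_pos_right hy hf0.le).ne'
  have hsq : n * (n + 1) * f ≤ p ^ 2 := by
    nlinarith [mul_pos (by linarith : (0 : ℝ) < n + 1)
      (by nlinarith : (0 : ℝ) < (1 - f) * (n + 1) - f)]
  have hsecant : 1 - 1.5 * f - n + m * f + n * ((n + 1) / (m + 1) - f) =
      ((n + 1 - f) * (2 - 3.5 * f) + n * f ^ 2) / p +
        (y - p) * (y * p - n * (n + 1) * f) / (y * p) := by
    field_simp
    ring
  rw [hsecant]
  have := gap_at_boundary_pos hf' hn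
  have : 0 ≤ y * p - n * (n + 1) * f := by nlinarith
  positivity

lemma gap_pos_of_le (hf : 2 / 3 < f) (hf' : f < 12 / 17) (hn : 5 ≤ n) (hm0 : 0 ≤ m)
    (hm : m + 2 ≤ (n + 1) / f) :
    0 < 1 - 1.5 * f - n + m * f + n * ((n + 1) / (m + 1) - f) +
      n * ((n + 1) / (m + 2) - f) := by
  have hf0 : 0 < f := by linarith
  set p := n + 1 - f
  set y := f * (m + 1)
  have hp : 0 < p := by linarith
  have hyp : y ≤ p := by
    rw [le_div_iff₀ hf0] at hm
    linarith
  have hy : 0 < y := by positivity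
  have hquartic : p ^ 2 * (n + 1) ^ 2 ≤ n * (n + 1) * f * (p ^ 2 + (n + 1) ^ 2) := by
    have h1 : 0 ≤ p ^ 2 * ((2 * f - 1) * (n + 1) - 2 * f) :=
      mul_nonneg (sq_nonneg _) (by nlinarith)
    have h2 : 0 ≤ f * n * ((n + 1) ^ 2 - p ^ 2) :=
      mul_nonneg (by positivity) (by nlinarith)
    nlinarith [mul_nonneg (by linarith : (0 : ℝ) ≤ n + 1) (add_nonneg h1 h2)]
  have hsecant : 1 - 1.5 * f - n + m * f + n * ((n + 1) / (m + 1) - f) +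
      n * ((n + 1) / (m + 2) - f) =
      ((n + 1 - f) * (2 - 3.5 * f) + n * f ^ 2) / p +
        (p - y) * (n * (n + 1) * f / (y * p) + n * (n + 1) * f / ((y + f) * (n + 1)) - 1) := by
    field_simp
    ring
  have hslope : 1 ≤ n * (n + 1) * f / (y * p) + n * (n + 1) * f / ((y + f) * (n + 1)) :=
    calc 1 ≤ n * (n + 1) * f / p ^ 2 + n * (n + 1) * f / (n + 1) ^ 2 := by
          rw [div_add_div _ _ (by positivity) (by positivity), le_div_iff₀ (by positivity)]
          linarith
      _ ≤ _ := by gcongr <;> nlinarith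
  rw [hsecant]
  have := gap_at_boundary_pos hf' hn
  have : 0 ≤ p - y := by linarith
  have : 0 ≤ n * (n + 1) * f / (y * p) + n * (n + 1) * f / ((y + f) * (n + 1)) - 1 := by
    linarith
  positivity

end Gap

/-- Key monotonicity claim of Appendix A of the paper: the sequence `G(ℓ)/ℓ`
is strictly increasing for integers `ℓ ≥ 5`, where `f ∈ (0,1)` is the unique
root of `ln(1/f) = f/2`. -/
theorem stmt_15
    (f : ℝ) (hf0 : 0 < f) (hf1 : f < 1)
    (hf : Real.log (1 / f) = f / 2)
    (g : ℕ → ℝ → ℝ)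
    (hg : ∀ ℓ : ℕ, 1 ≤ ℓ → ∀ t : ℝ,
      g ℓ t = if t < ℓ * f then 0 else if t < ℓ then (t - ℓ * f) / ℓ else 1 - f)
    (G : ℝ → ℝ)
    (hG : ∀ t : ℝ, G t = 1.5 * f - 1 + ∑' ℓ : ℕ, g (ℓ + 1) t) :
    ∀ ℓ : ℕ, 5 ≤ ℓ →
      G ((ℓ : ℝ) + 1) / ((ℓ : ℝ) + 1) > G (ℓ : ℝ) / (ℓ : ℝ) := by
  intro n hn
  obtain ⟨hf23, hf1217⟩ :=
    mem_Ioo_of_mul_exp_half_eq_one hf0 (mul_exp_half_eq_one_of_log_one_div hf0 hf)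
  have hn5 : (5 : ℝ) ≤ n := by exact_mod_cast hn
  set m := ⌊(n : ℝ) / f⌋₊
  have hnm : n < m := Nat.le_floor <| (le_div_iff₀ hf0).2 <| by push_cast; nlinarith
  have hgap : G ((n : ℝ) + 1) * n - G n * (n + 1) = 1 - 1.5 * f - n + m * f +
      n * ∑ j ∈ Ioc m ⌊((n : ℝ) + 1) / f⌋₊, (((n : ℝ) + 1) / j - f) := by
    have hsucc := tsum_demand_natCast hf0 hf1.le hg (n + 1)
    push_cast at hsucc
    rw [hG, hG, hsucc, tsum_demand_natCast hf0 hf1.le hg n]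
    linear_combination mul_sum_Ioc_sub_mul_sum_Ioc f hnm
      (Nat.floor_le_floor (div_le_div_of_nonneg_right (by linarith : (n : ℝ) ≤ n + 1) hf0.le))
  rw [gt_iff_lt, div_lt_div_iff₀ (by positivity) (by positivity), ← sub_pos, hgap]
  rcases lt_or_ge (((n : ℝ) + 1) / f) (m + 2) with h | h
  · rw [floor_add_one_div_eq_add_one n.cast_nonneg hf0 hf1.le h, Nat.Ioc_succ_singleton,
      sum_singleton]
    push_cast
    exact gap_pos_of_lt hf23 hf1217 hn5 h
  · rw [floor_add_one_div_eq_add_two n.cast_nonneg (by linarith) h,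
      sum_Ioc_succ_top (b := m + 1) (by omega), Nat.Ioc_succ_singleton, sum_singleton]
    push_cast
    rw [add_assoc (m : ℝ), one_add_one_eq_two]
    linarith [gap_pos_of_le hf23 hf1217 hn5 m.cast_nonneg h]
end

section
/- Let f be the unique real in (0,1) satisfying ln(1/f) = f/2. For each positive integer ℓ define g_ℓ(t) = 0 if t < ℓ·f, g_ℓ(t) = (t − ℓ·f)/ℓ if ℓ·f ≤ t < ℓ, and g_ℓ(t) = 1 − f if t ≥ ℓ, and define G(t) = 1.5·f − 1 + Σ_{ℓ=1}^∞ g_ℓ(t). Then G(ℓ)/ℓ → f/2 as the positive integer ℓ → ∞. -/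
open Filter Finset Real Topology

/-!
At an integer time `n`, the ramps with `ℓ ≤ n` are saturated at `1 - f`, those with
`n < ℓ ≤ n / f` contribute `n / ℓ - f`, and the others vanish. Hence, with `m = ⌊n / f⌋`,
`G(n) / n = (1 - f) + (H_m - H_n) - f (m / n - 1) + O(1 / n)`. Since `H_k - log k → γ`,
`H_m - H_n → log (1 / f) = f / 2`, and the limit is `(1 - f) + f / 2 - (1 - f) = f / 2`.
-/

lemma sum_Ico_inv_succ_eq_harmonic_sub {a b : ℕ} (hab : a ≤ b) :
    ∑ ℓ ∈ Ico a b, ((ℓ : ℝ) + 1)⁻¹ = harmonic b - harmonic a := by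
  rw [sum_Ico_eq_sub _ hab]
  simp [harmonic]

lemma tendsto_harmonic_sub_harmonic {u v : ℕ → ℕ} {r : ℝ} (hr : 0 < r)
    (hu : Tendsto u atTop atTop) (hv : Tendsto v atTop atTop)
    (huv : Tendsto (fun n ↦ (u n : ℝ) / v n) atTop (𝓝 r)) :
    Tendsto (fun n ↦ (harmonic (u n) - harmonic (v n) : ℝ)) atTop (𝓝 (log r)) := by
  have hγ := (tendsto_harmonic_sub_log.comp hu).sub (tendsto_harmonic_sub_log.comp hv)
  have hlog := (continuousAt_log hr.ne').tendsto.comp huv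
  rw [sub_self] at hγ
  refine (zero_add (log r) ▸ hγ.add hlog).congr' ?_
  filter_upwards [hu.eventually_gt_atTop 0, hv.eventually_gt_atTop 0] with n hun hvn
  simp only [Function.comp_apply]
  rw [log_div (by positivity) (by positivity)]
  ring

/-- The paper's `g_ℓ`. -/
noncomputable def rampDemand (f : ℝ) (ℓ : ℕ) (t : ℝ) : ℝ :=
  if t < ℓ * f then 0 else if t < ℓ then (t - ℓ * f) / ℓ else 1 - f

section rampDemand

variable {f t : ℝ} {ℓ : ℕ}

lemma rampDemand_of_lt (h : t < ℓ * f) : rampDemand f ℓ t = 0 := if_pos h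

lemma rampDemand_of_mem_Ico (hℓ : ℓ ≠ 0) (h₁ : ℓ * f ≤ t) (h₂ : t < ℓ) :
    rampDemand f ℓ t = t * (ℓ : ℝ)⁻¹ - f := by
  rw [rampDemand, if_neg h₁.not_gt, if_pos h₂]
  field_simp

lemma rampDemand_of_le (hf1 : f ≤ 1) (h : ℓ ≤ t) : rampDemand f ℓ t = 1 - f := by
  have : ℓ * f ≤ t := (mul_le_of_le_one_right ℓ.cast_nonneg hf1).trans h
  rw [rampDemand, if_neg this.not_gt, if_neg h.not_gt]

lemma le_floor_inv_mul_natCast (hf0 : 0 < f) (hf1 : f ≤ 1) (n : ℕ) : n ≤ ⌊f⁻¹ * n⌋₊ :=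
  Nat.le_floor <| le_mul_of_one_le_left n.cast_nonneg (one_le_inv₀ hf0 |>.2 hf1)

lemma tsum_rampDemand_natCast (hf0 : 0 < f) (hf1 : f ≤ 1) (n : ℕ) :
    ∑' ℓ : ℕ, rampDemand f (ℓ + 1) n =
      n * (1 - f) + n * (harmonic ⌊f⁻¹ * n⌋₊ - harmonic n) - f * (⌊f⁻¹ * n⌋₊ - n) := by
  set m := ⌊f⁻¹ * n⌋₊
  have hnm : n ≤ m := le_floor_inv_mul_natCast hf0 hf1 n
  have hvanish : ∀ ℓ ∉ range m, rampDemand f (ℓ + 1) n = 0 := by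
    intro ℓ hℓ
    apply rampDemand_of_lt
    have := (Nat.floor_lt (by positivity)).1 (Nat.lt_succ_of_le (not_lt.1 (mem_range.not.1 hℓ)))
    rw [inv_mul_lt_iff₀ hf0] at this
    linarith
  have hsat : ∀ ℓ ∈ range n, rampDemand f (ℓ + 1) n = 1 - f := by
    intro ℓ hℓ
    exact rampDemand_of_le hf1 (by exact_mod_cast mem_range.1 hℓ)
  have hslope : ∀ ℓ ∈ Ico n m, rampDemand f (ℓ + 1) n = n * ((ℓ : ℝ) + 1)⁻¹ - f := by
    intro ℓ hℓ
    obtain ⟨hnℓ, hℓm⟩ := mem_Ico.1 hℓ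
    have hℓf : ((ℓ + 1 : ℕ) : ℝ) * f ≤ n := by
      have := (Nat.le_floor_iff (by positivity)).1 (Nat.succ_le_of_lt hℓm)
      rw [le_inv_mul_iff₀ hf0] at this
      linarith
    rw [rampDemand_of_mem_Ico ℓ.succ_ne_zero hℓf (by exact_mod_cast Nat.lt_succ_of_le hnℓ)]
    push_cast
    rfl
  rw [tsum_eq_sum hvanish, ← sum_range_add_sum_Ico _ hnm, sum_congr rfl hsat, sum_congr rfl hslope,
    sum_const, card_range, sum_sub_distrib, ← mul_sum, sum_Ico_inv_succ_eq_harmonic_sub hnm, sum_const,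
    Nat.card_Ico, nsmul_eq_mul, nsmul_eq_mul, Nat.cast_sub hnm]
  ring

end rampDemand

/-- Limiting value computed in Appendix A of the paper: `G(ℓ)/ℓ → f/2` as the
positive integer `ℓ → ∞`, where `f ∈ (0,1)` is the unique root of
`ln(1/f) = f/2`. -/
theorem stmt_16
    (f : ℝ) (hf0 : 0 < f) (hf1 : f < 1)
    (hf : Real.log (1 / f) = f / 2)
    (g : ℕ → ℝ → ℝ)
    (hg : ∀ ℓ : ℕ, 1 ≤ ℓ → ∀ t : ℝ,
      g ℓ t = if t < ℓ * f then 0 else if t < ℓ then (t - ℓ * f) / ℓ else 1 - f)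
    (G : ℝ → ℝ)
    (hG : ∀ t : ℝ, G t = 1.5 * f - 1 + ∑' ℓ : ℕ, g (ℓ + 1) t) :
    Filter.Tendsto (fun ℓ : ℕ => G (ℓ : ℝ) / (ℓ : ℝ)) Filter.atTop
      (nhds (f / 2)) := by
  set m : ℕ → ℕ := fun n ↦ ⌊f⁻¹ * n⌋₊
  have hratio : Tendsto (fun n : ℕ ↦ (m n : ℝ) / n) atTop (𝓝 f⁻¹) :=
    (tendsto_nat_floor_mul_div_atTop (inv_nonneg.2 hf0.le)).comp tendsto_natCast_atTop_atTop
  have hharm : Tendsto (fun n ↦ (harmonic (m n) - harmonic n : ℝ)) atTop (𝓝 (f / 2)) := by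
    rw [← hf, one_div]
    exact tendsto_harmonic_sub_harmonic (inv_pos.2 hf0)
      (tendsto_atTop_mono (le_floor_inv_mul_natCast hf0 hf1.le) tendsto_id) tendsto_id hratio
  have hGn : ∀ n : ℕ, n ≠ 0 → G n / n =
      (1.5 * f - 1) * (n : ℝ)⁻¹ + (1 - f) + (harmonic (m n) - harmonic n) - f * (m n / n) + f := by
    intro n hn
    have hgr (ℓ : ℕ) : g (ℓ + 1) n = rampDemand f (ℓ + 1) n := hg (ℓ + 1) (Nat.le_add_left 1 ℓ) n
    have hm : m n = ⌊f⁻¹ * n⌋₊ := rfl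
    rw [hG, tsum_congr hgr, tsum_rampDemand_natCast hf0 hf1.le, ← hm]
    field_simp
    ring
  have hinv := (tendsto_inv_atTop_nhds_zero_nat (𝕜 := ℝ)).const_mul (1.5 * f - 1)
  have hlim := (((hinv.add_const (1 - f)).add hharm).sub (hratio.const_mul f)).add_const f
  rw [mul_zero, zero_add, mul_inv_cancel₀ hf0.ne'] at hlim
  refine (by ring : 1 - f + f / 2 - 1 + f = f / 2) ▸ hlim.congr' ?_
  filter_upwards [eventually_ne_atTop 0] with n hn
  exact (hGn n hn).symm
end

section
/- Let f be the unique real in (0,1) satisfying ln(1/f) = f/2. For each positive integer ℓ define g_ℓ(t) = 0 if t < ℓ·f, g_ℓ(t) = (t − ℓ·f)/ℓ if ℓ·f ≤ t < ℓ, and g_ℓ(t) = 1 − f if t ≥ ℓ, and define G(t) = 1.5·f − 1 + Σ_{ℓ=1}^∞ g_ℓ(t). Then for every real t ≥ 1, G(t) ≤ (f/2)·t. -/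
/-!
On a stretch of `t` where `n = ⌊t⌋` and `m = ⌊t / f⌋` are fixed, `G t` is affine in `t`, so
`G t - f t / 2` is largest at an end of the stretch: at an integer `t = k` or at a point `t = k f`.
At both kinds of points the harmonic sum `∑_{n < j ≤ m} 1 / j` is bounded by the midpoint
estimate `log ((2 m + 1) / (2 n + 1))`, and `log f = -f / 2` turns `log (f u) ≤ f u - 1` into the
required inequality. The midpoint estimate is too weak only at the six points `k f < 5`, which are
checked by hand using `0.7 ≤ f ≤ 0.71`.
-/

open Real Finset

theorem two_mul_le_log_one_add_sub_log_one_sub {x : ℝ} (h0 : 0 ≤ x) (h1 : x < 1) :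
    2 * x ≤ log (1 + x) - log (1 - x) := by
  have hsum := hasSum_log_sub_log_of_abs_lt_one (x := x) (by rwa [abs_of_nonneg h0])
  simpa using le_hasSum hsum 0 fun j _ ↦ by positivity

theorem inv_succ_le_log_sub_log (m : ℕ) :
    ((m : ℝ) + 1)⁻¹ ≤ log (2 * (m + 1) + 1) - log (2 * m + 1) := by
  have hm : (0 : ℝ) < 2 * m + 2 := by positivity
  have h := two_mul_le_log_one_add_sub_log_one_sub (x := (2 * m + 2)⁻¹) (by positivity)
    (inv_lt_one_of_one_lt₀ (by linarith))
  have e1 : 1 + (2 * (m : ℝ) + 2)⁻¹ = (2 * (m + 1) + 1) / (2 * m + 2) := by field_simp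
  have e2 : 1 - (2 * (m : ℝ) + 2)⁻¹ = (2 * m + 1) / (2 * m + 2) := by field_simp; ring
  rw [e1, e2, log_div (by positivity) hm.ne', log_div (by positivity) hm.ne'] at h
  have e3 : 2 * (2 * (m : ℝ) + 2)⁻¹ = ((m : ℝ) + 1)⁻¹ := by field_simp
  linarith

theorem sum_Ioc_inv_le_log_sub_log {n m : ℕ} (h : n ≤ m) :
    ∑ j ∈ Ioc n m, (j : ℝ)⁻¹ ≤ log (2 * m + 1) - log (2 * n + 1) := by
  induction m, h using Nat.le_induction with
  | base => simp
  | succ m hnm ih =>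
    rw [sum_Ioc_succ_top hnm]
    push_cast
    linarith [inv_succ_le_log_sub_log m]

theorem mem_Icc_of_log_eq_neg_half {f : ℝ} (hf0 : 0 < f) (hlog : log f = -(f / 2)) :
    f ∈ Set.Icc 0.7 0.71 := by
  constructor
  · rcases le_or_gt 1 f with h1 | h1
    · linarith
    -- `1 / f = (1 + w) / (1 - w)` for `w = (1 - f) / (1 + f)`
    have hw := two_mul_le_log_one_add_sub_log_one_sub (x := (1 - f) / (1 + f))
      (by apply div_nonneg <;> linarith) (by rw [div_lt_one (by linarith)]; linarith)
    have e1 : 1 + (1 - f) / (1 + f) = 2 / (1 + f) := by field_simp; ring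
    have e2 : 1 - (1 - f) / (1 + f) = 2 * f / (1 + f) := by field_simp; ring
    rw [e1, e2, log_div (by norm_num) (by linarith), log_div (by positivity) (by linarith),
      log_mul (by norm_num) hf0.ne', hlog] at hw
    have : (1 - f) / (1 + f) ≤ f / 4 := by linarith
    rw [div_le_iff₀ (by linarith)] at this
    nlinarith
  · have hexp : f * exp (f / 2) = 1 := by
      nth_rewrite 1 [← exp_log hf0]
      rw [← exp_add, hlog, neg_add_cancel, exp_zero]
    have := quadratic_le_exp_of_nonneg (x := f / 2) (by positivity)
    nlinarith [mul_le_mul_of_nonneg_left this hf0.le]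

noncomputable def taskDemand (f : ℝ) (ℓ : ℕ) (t : ℝ) : ℝ :=
  if t < ℓ * f then 0 else if t < ℓ then (t - ℓ * f) / ℓ else 1 - f

-- `G t` while the tasks `ℓ ≤ n` contribute `1 - f` and the tasks `n < ℓ ≤ m` are ramping up
noncomputable def dbfPiece (f : ℝ) (n m : ℕ) (t : ℝ) : ℝ :=
  1.5 * f - 1 + n * (1 - f) + ∑ j ∈ Ioc n m, (t / j - f)

theorem tsum_taskDemand {f t : ℝ} (hf0 : 0 < f) (hf1 : f ≤ 1) (ht : 0 ≤ t) :
    1.5 * f - 1 + ∑' ℓ : ℕ, taskDemand f (ℓ + 1) t = dbfPiece f ⌊t⌋₊ ⌊t / f⌋₊ t := by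
  have htf : 0 ≤ t / f := div_nonneg ht hf0.le
  have hnm : ⌊t⌋₊ ≤ ⌊t / f⌋₊ := Nat.floor_le_floor (le_div_self ht hf0 hf1)
  have hzero : ∀ ℓ ∉ range ⌊t / f⌋₊, taskDemand f (ℓ + 1) t = 0 := by
    intro ℓ hℓ
    rw [mem_range, not_lt, ← Nat.lt_add_one_iff, Nat.floor_lt htf, div_lt_iff₀ hf0] at hℓ
    exact if_pos (by exact_mod_cast hℓ)
  have hfull : ∀ ℓ ∈ Ioc 0 ⌊t⌋₊, taskDemand f ℓ t = 1 - f := by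
    intro ℓ hℓ
    have hℓt : (ℓ : ℝ) ≤ t := (Nat.le_floor_iff ht).mp (mem_Ioc.mp hℓ).2
    rw [taskDemand, if_neg (by nlinarith), if_neg (by linarith)]
  have hramp : ∀ ℓ ∈ Ioc ⌊t⌋₊ ⌊t / f⌋₊, taskDemand f ℓ t = t / ℓ - f := by
    intro ℓ hℓ
    obtain ⟨h1, h2⟩ := mem_Ioc.mp hℓ
    have htℓ : t < ℓ := (Nat.floor_lt ht).mp h1
    have hℓf : (ℓ : ℝ) * f ≤ t := by
      rw [← le_div_iff₀ hf0]
      exact (Nat.le_floor_iff htf).mp h2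
    have hℓ0 : (ℓ : ℝ) ≠ 0 := Nat.cast_ne_zero.mpr (by omega)
    rw [taskDemand, if_neg (by linarith), if_pos htℓ, sub_div, mul_div_cancel_left₀ _ hℓ0]
  rw [tsum_eq_sum hzero, range_eq_Ico, sum_Ico_add' (fun ℓ ↦ taskDemand f ℓ t),
    Ico_add_one_add_one_eq_Ioc, ← sum_Ioc_consecutive _ (Nat.zero_le _) hnm, sum_congr rfl hfull,
    sum_congr rfl hramp, sum_const, Nat.card_Ioc, Nat.sub_zero, nsmul_eq_mul, dbfPiece]
  ring

theorem dbfPiece_eq {f t : ℝ} {n m : ℕ} (h : n ≤ m) :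
    dbfPiece f n m t =
      1.5 * f - 1 + n * (1 - f) + t * ∑ j ∈ Ioc n m, (j : ℝ)⁻¹ - f * (m - n) := by
  simp only [dbfPiece, sum_sub_distrib, mul_sum, div_eq_mul_inv, sum_const, Nat.card_Ioc,
    nsmul_eq_mul, Nat.cast_sub h]
  ring

theorem dbfPiece_succ_left {f : ℝ} {n m : ℕ} (h : n < m) :
    dbfPiece f n m (n + 1) = dbfPiece f (n + 1) m (n + 1) := by
  rw [dbfPiece, dbfPiece, ← sum_Ioc_consecutive _ n.le_succ h, Nat.Ioc_succ_singleton,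
    sum_singleton, Nat.cast_succ, div_self (by positivity)]
  ring

theorem dbfPiece_succ_right {f : ℝ} {n m : ℕ} (h : n ≤ m) :
    dbfPiece f n (m + 1) ((m + 1) * f) = dbfPiece f n m ((m + 1) * f) := by
  rw [dbfPiece, dbfPiece, sum_Ioc_succ_top h, Nat.cast_succ, mul_div_cancel_left₀ _ (by positivity),
    sub_self, add_zero]

theorem dbfPiece_self_le {f : ℝ} {k m : ℕ} (hf : 2 / 3 ≤ f) (hlog : log f = -(f / 2))
    (hk : 1 ≤ k) (hkm : k ≤ m) : dbfPiece f k m k ≤ f / 2 * k := by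
  have hk1 : (1 : ℝ) ≤ k := by exact_mod_cast hk
  have hkm' : (k : ℝ) ≤ m := by exact_mod_cast hkm
  set u : ℝ := (2 * m + 1) / (2 * k + 1) with hu
  have hu1 : 1 ≤ u := by rw [hu, le_div_iff₀ (by positivity)]; linarith
  have hmu : 2 * (m : ℝ) + 1 = u * (2 * k + 1) := by rw [hu]; field_simp
  have hH : ∑ j ∈ Ioc k m, (j : ℝ)⁻¹ ≤ log u := by
    rw [hu, log_div (by positivity) (by positivity)]
    exact sum_Ioc_inv_le_log_sub_log hkm
  have hψ : 1 + log u - f * u - f / 2 ≤ 0 := by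
    have := log_le_sub_one_of_pos (x := f * u) (by positivity)
    rw [log_mul (by positivity) (by positivity), hlog] at this
    linarith
  have := log_le_sub_one_of_pos (x := u) (by positivity)
  -- once `∑ ≤ log u`, the goal reads `(k - 1) ψ + (log u - (u - 1)) + (1 - 3 f / 2) (u - 1) ≤ 0`
  rw [dbfPiece_eq hkm]
  nlinarith [mul_le_mul_of_nonneg_left hH (by positivity : (0 : ℝ) ≤ k),
    mul_nonpos_of_nonneg_of_nonpos (by linarith : (0 : ℝ) ≤ k - 1) hψ,
    mul_nonneg (by linarith : (0 : ℝ) ≤ 3 * f / 2 - 1) (by linarith : (0 : ℝ) ≤ u - 1)]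

theorem dbfPiece_mul_le_of_five_le {f : ℝ} {n k : ℕ} (hf : f ≤ 0.71) (hf0 : 0 < f)
    (hlog : log f = -(f / 2)) (hn : 5 ≤ n) (hnk : n ≤ k * f) (hkn : k * f ≤ n + 1) :
    dbfPiece f n k (k * f) ≤ f / 2 * (k * f) := by
  have hn5 : (5 : ℝ) ≤ n := by exact_mod_cast hn
  have hk : n ≤ k := by
    have : (n : ℝ) ≤ k := by nlinarith
    exact_mod_cast this
  set v : ℝ := (2 * k + 1) / (2 * n + 1) with hv
  have hv0 : 0 < v := by positivity
  have hH : ∑ j ∈ Ioc n k, (j : ℝ)⁻¹ ≤ f * v - 1 + f / 2 := by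
    have := log_le_sub_one_of_pos (x := f * v) (by positivity)
    rw [log_mul hf0.ne' hv0.ne', hlog, hv, log_div (by positivity) (by positivity)] at this
    linarith [sum_Ioc_inv_le_log_sub_log hk]
  -- `d ∈ [0, 1]`, so the numerator is at most `n (4 f - 3) + 5 f / 2 - 1 < 0`
  set d : ℝ := k * f - n with hd
  have hN : 2 * d ^ 2 + d * f - 2 * d + 4 * n * f + 1.5 * f - 3 * n - 1 ≤ 0 := by
    nlinarith [mul_nonneg (by linarith : (0 : ℝ) ≤ d) (by linarith : (0 : ℝ) ≤ 1 - d),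
      mul_nonneg hf0.le (by linarith : (0 : ℝ) ≤ 1 - d),
      mul_nonneg (by linarith : (0 : ℝ) ≤ n - 5) (by linarith : (0 : ℝ) ≤ 3 - 4 * f)]
  have hbound : dbfPiece f n k (k * f) - f / 2 * (k * f) ≤
      (2 * d ^ 2 + d * f - 2 * d + 4 * n * f + 1.5 * f - 3 * n - 1) / (2 * n + 1) := by
    have hdiv : (2 * d ^ 2 + d * f - 2 * d + 4 * n * f + 1.5 * f - 3 * n - 1) / (2 * n + 1) =
        1.5 * f - 1 + n * (1 - f) + k * f * (f * v - 1 + f / 2) - f * (k - n) -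
          f / 2 * (k * f) := by
      rw [hv, hd]
      field_simp
      ring
    rw [hdiv, dbfPiece_eq hk]
    nlinarith [mul_le_mul_of_nonneg_left hH (by positivity : (0 : ℝ) ≤ k * f)]
  linarith [div_nonpos_of_nonpos_of_nonneg hN (by positivity : (0 : ℝ) ≤ 2 * n + 1)]

theorem dbfPiece_mul_le_of_le_four {f : ℝ} {n k : ℕ} (hf : f ∈ Set.Icc 0.7 0.71)
    (hn1 : 1 ≤ n) (hn4 : n ≤ 4) (hnk : n ≤ k * f) (hkn : k * f ≤ n + 1) :
    dbfPiece f n k (k * f) ≤ f / 2 * (k * f) := by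
  obtain ⟨hf1, hf2⟩ := hf
  have hk : k ≤ 7 := by
    have : (k : ℝ) < 8 := by
      have : (n : ℝ) ≤ 4 := by exact_mod_cast hn4
      nlinarith
    have : k < 8 := by exact_mod_cast this
    omega
  -- only `(n, k) ∈ {(1, 2), (2, 3), (2, 4), (3, 5), (4, 6), (4, 7)}` satisfy `n ≤ k f ≤ n + 1`
  interval_cases n <;> interval_cases k <;> push_cast at hnk hkn ⊢ <;>
    first | linarith | (simp [dbfPiece, sum_Ioc_succ_top]; nlinarith)

theorem dbfPiece_mul_le {f : ℝ} {n k : ℕ} (hf : f ∈ Set.Icc 0.7 0.71) (hlog : log f = -(f / 2))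
    (hn : 1 ≤ n) (hnk : n ≤ k * f) (hkn : k * f ≤ n + 1) :
    dbfPiece f n k (k * f) ≤ f / 2 * (k * f) := by
  rcases le_or_gt n 4 with h | h
  · exact dbfPiece_mul_le_of_le_four hf hn h hnk hkn
  · exact dbfPiece_mul_le_of_five_le hf.2 (by linarith [hf.1]) hlog h hnk hkn

theorem dbfPiece_le {f t : ℝ} {n m : ℕ} (hf : f ∈ Set.Icc 0.7 0.71) (hlog : log f = -(f / 2))
    (hn : 1 ≤ n) (hnm : n ≤ m) (hnt : n ≤ t) (htn : t ≤ n + 1) (htm : t ≤ (m + 1) * f) :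
    dbfPiece f n m t ≤ f / 2 * t := by
  obtain ⟨hf1, hf2⟩ := hf
  set S := ∑ j ∈ Ioc n m, (j : ℝ)⁻¹
  -- compare with the left end `n` or the right end `min (n + 1) ((m + 1) f)` of the stretch
  have haff : ∀ s, dbfPiece f n m t - f / 2 * t =
      dbfPiece f n m s - f / 2 * s + (t - s) * (S - f / 2) := by
    intro s
    rw [dbfPiece_eq hnm, dbfPiece_eq hnm]
    ring
  rcases le_or_gt S (f / 2) with hS | hS
  · have := dbfPiece_self_le (by linarith) hlog hn hnm
    nlinarith [haff n]
  rcases le_or_gt ((m + 1) * f) (n + 1) with hr | hr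
  · have := dbfPiece_mul_le ⟨hf1, hf2⟩ hlog hn (k := m + 1) (by push_cast; linarith)
      (by push_cast; linarith)
    push_cast at this
    rw [dbfPiece_succ_right hnm] at this
    nlinarith [haff ((m + 1) * f)]
  · have hm : n < m := by
      have : (n : ℝ) < m := by nlinarith
      exact_mod_cast this
    have := dbfPiece_self_le (by linarith) hlog (Nat.le_add_left 1 n) hm
    push_cast at this
    rw [← dbfPiece_succ_left hm] at this
    nlinarith [haff (n + 1)]

theorem dbfPiece_floor_le {f t : ℝ} (hf : f ∈ Set.Icc 0.7 0.71) (hlog : log f = -(f / 2))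
    (ht : 1 ≤ t) : dbfPiece f ⌊t⌋₊ ⌊t / f⌋₊ t ≤ f / 2 * t := by
  have hf0 : 0 < f := by linarith [hf.1]
  apply dbfPiece_le hf hlog
  · exact (Nat.one_le_floor_iff t).mpr ht
  · exact Nat.floor_le_floor (le_div_self (by linarith) hf0 (by linarith [hf.2]))
  · exact Nat.floor_le (by linarith)
  · exact (Nat.lt_floor_add_one t).le
  · rw [← div_le_iff₀ hf0]
    exact (Nat.lt_floor_add_one _).le

theorem stmt_17_general
    (f : ℝ) (hf0 : 0 < f)
    (hf : Real.log (1 / f) = f / 2)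
    (g : ℕ → ℝ → ℝ)
    (hg : ∀ ℓ : ℕ, 1 ≤ ℓ → ∀ t : ℝ,
      g ℓ t = if t < ℓ * f then 0 else if t < ℓ then (t - ℓ * f) / ℓ else 1 - f)
    (G : ℝ → ℝ)
    (hG : ∀ t : ℝ, G t = 1.5 * f - 1 + ∑' ℓ : ℕ, g (ℓ + 1) t) :
    ∀ t : ℝ, 1 ≤ t → G t ≤ (f / 2) * t := by
  have hlog : log f = -(f / 2) := by
    rw [one_div, log_inv] at hf
    linarith
  have hfI := mem_Icc_of_log_eq_neg_half hf0 hlog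
  intro t ht
  have hgt : ∀ ℓ : ℕ, g (ℓ + 1) t = taskDemand f (ℓ + 1) t := fun ℓ ↦ hg (ℓ + 1) ℓ.succ_pos t
  rw [hG, tsum_congr hgt, tsum_taskDemand hf0 (by linarith [hfI.2]) (by linarith)]
  exact dbfPiece_floor_le hfI hlog ht

/-- Main analytic claim of Appendix A of the paper (Theorem 9): the
over-approximated total demand bound function `G(t)` never exceeds `(f/2)·t`
for `t ≥ 1`, where `f ∈ (0,1)` is the unique root of `ln(1/f) = f/2`. -/
theorem stmt_17
    (f : ℝ) (hf0 : 0 < f) (hf1 : f < 1)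
    (hf : Real.log (1 / f) = f / 2)
    (g : ℕ → ℝ → ℝ)
    (hg : ∀ ℓ : ℕ, 1 ≤ ℓ → ∀ t : ℝ,
      g ℓ t = if t < ℓ * f then 0 else if t < ℓ then (t - ℓ * f) / ℓ else 1 - f)
    (G : ℝ → ℝ)
    (hG : ∀ t : ℝ, G t = 1.5 * f - 1 + ∑' ℓ : ℕ, g (ℓ + 1) t) :
    ∀ t : ℝ, 1 ≤ t → G t ≤ (f / 2) * t :=
  stmt_17_general f hf0 hf g hg G hG
end

section
/- Let f be the unique real in (0,1) satisfying ln(1/f) = f/2. For each positive integer ℓ define g_ℓ(t) = 0 if t < ℓ·f, g_ℓ(t) = (t − ℓ·f)/ℓ if ℓ·f ≤ t < ℓ, and g_ℓ(t) = 1 − f if t ≥ ℓ, and define G(t) = 1.5·f − 1 + Σ_{ℓ=1}^∞ g_ℓ(t). Then for every positive integer ℓ and every real t with ℓ ≤ t ≤ ℓ + 1, G(t)/t ≤ max{ G(ℓ)/ℓ, G(ℓ+1)/(ℓ+1) }. -/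
/-!
Each summand `g_k` is convex on `[ℓ, ℓ + 1]`: for `k ≤ ℓ` it is the constant `1 - f` there, and for
`k ≥ ℓ + 1` it equals `max 0 ((t - k f) / k)` there. Only finitely many summands are nonzero at a
given `t`, so `G` is convex on `[ℓ, ℓ + 1]`. If `M` is the larger of the two endpoint ratios, then
`G t - M t` is convex and nonpositive at both endpoints, hence nonpositive on the whole interval.
-/

open Set

theorem ConvexOn.tsum {ι E : Type*} [AddCommMonoid E] [Module ℝ E] {s : Set E}
    {F : ι → E → ℝ} (hs : Convex ℝ s) (hF : ∀ i, ConvexOn ℝ s (F i))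
    (hsum : ∀ x ∈ s, Summable fun i => F i x) :
    ConvexOn ℝ s fun x => ∑' i, F i x := by
  refine ⟨hs, fun x hx y hy a b ha hb hab => ?_⟩
  calc ∑' i, F i (a • x + b • y)
      ≤ ∑' i, (a * F i x + b * F i y) :=
        (hsum _ (hs hx hy ha hb hab)).tsum_le_tsum (fun i => (hF i).2 hx hy ha hb hab)
          (((hsum x hx).mul_left a).add ((hsum y hy).mul_left b))
    _ = a • ∑' i, F i x + b • ∑' i, F i y := by
        rw [Summable.tsum_add ((hsum x hx).mul_left a) ((hsum y hy).mul_left b),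
          tsum_mul_left, tsum_mul_left, smul_eq_mul, smul_eq_mul]

theorem div_le_max_div_of_convexOn {G : ℝ → ℝ} {a b t : ℝ} (ha : 0 < a)
    (hG : ConvexOn ℝ (Icc a b) G) (ht : t ∈ Icc a b) :
    G t / t ≤ max (G a / a) (G b / b) := by
  set M := max (G a / a) (G b / b)
  have hGa : G a ≤ M * a := (div_le_iff₀ ha).1 (le_max_left _ _)
  have hGb : G b ≤ M * b := (div_le_iff₀ (by linarith [ht.1, ht.2])).1 (le_max_right _ _)
  have h := (hG.add (((-M) • LinearMap.id : ℝ →ₗ[ℝ] ℝ).convexOn (convex_Icc a b))).le_on_segment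
    (left_mem_Icc.2 (ht.1.trans ht.2)) (right_mem_Icc.2 (ht.1.trans ht.2))
    (by rwa [segment_eq_Icc (ht.1.trans ht.2)])
  simp only [Pi.add_apply, LinearMap.smul_apply, LinearMap.id_apply, smul_eq_mul] at h
  have h_ends : max (G a + -M * a) (G b + -M * b) ≤ 0 := max_le (by linarith) (by linarith)
  rw [div_le_iff₀ (ha.trans_le ht.1)]
  linarith

/-- The summand `g_k` of `G`. -/
noncomputable def dbfTerm (f : ℝ) (k : ℕ) (t : ℝ) : ℝ :=
  if t < k * f then 0 else if t < k then (t - k * f) / k else 1 - f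

section DbfTerm

variable {f t : ℝ} {k : ℕ}

theorem dbfTerm_of_lt_mul (h : t < k * f) : dbfTerm f k t = 0 := if_pos h

theorem dbfTerm_of_le (hf1 : f ≤ 1) (h : (k : ℝ) ≤ t) : dbfTerm f k t = 1 - f := by
  have : (k : ℝ) * f ≤ k := mul_le_of_le_one_right k.cast_nonneg hf1
  rw [dbfTerm, if_neg (by linarith), if_neg (by linarith)]

theorem dbfTerm_eq_max_of_le (hf1 : f ≤ 1) (hk : 0 < k) (h : t ≤ k) :
    dbfTerm f k t = max 0 ((t - k * f) / k) := by
  have hk' : (0 : ℝ) < k := Nat.cast_pos.2 hk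
  rcases h.lt_or_eq with h | rfl
  · unfold dbfTerm
    split_ifs with h0
    · exact (max_eq_left (div_nonpos_of_nonpos_of_nonneg (by linarith) hk'.le)).symm
    · exact (max_eq_right (div_nonneg (by linarith) hk'.le)).symm
  · rw [dbfTerm_of_le hf1 le_rfl, max_eq_right (div_nonneg (by nlinarith) hk'.le)]
    field_simp

theorem convexOn_dbfTerm_Iic (hf1 : f ≤ 1) (hk : 0 < k) :
    ConvexOn ℝ (Iic (k : ℝ)) (dbfTerm f k) := by
  have hlin : ConvexOn ℝ (Iic (k : ℝ)) fun t => (t - k * f) / k :=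
    ((((k : ℝ)⁻¹ • LinearMap.id : ℝ →ₗ[ℝ] ℝ).convexOn (convex_Iic _)).add_const (-f)).congr
      fun t _ => by
        simp only [Pi.add_apply, LinearMap.smul_apply, LinearMap.id_apply, smul_eq_mul]
        field_simp
        ring
  exact ((convexOn_const 0 (convex_Iic _)).sup hlin).congr
    fun t ht => (dbfTerm_eq_max_of_le hf1 hk ht).symm

theorem convexOn_dbfTerm_Icc (hf1 : f ≤ 1) (hk : 0 < k) (ℓ : ℕ) :
    ConvexOn ℝ (Icc (ℓ : ℝ) (ℓ + 1)) (dbfTerm f k) := by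
  rcases le_or_gt k ℓ with hkℓ | hℓk
  · have hkℓ' : (k : ℝ) ≤ ℓ := Nat.cast_le.2 hkℓ
    exact (convexOn_const (1 - f) (convex_Icc _ _)).congr
      fun t ht => (dbfTerm_of_le hf1 (hkℓ'.trans ht.1)).symm
  · have hℓk' : (ℓ : ℝ) + 1 ≤ k := by exact_mod_cast hℓk
    exact (convexOn_dbfTerm_Iic hf1 hk).subset (fun t ht => ht.2.trans hℓk') (convex_Icc _ _)

theorem summable_dbfTerm (hf0 : 0 < f) (t : ℝ) : Summable fun n : ℕ => dbfTerm f (n + 1) t := by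
  refine summable_of_ne_finset_zero (s := Finset.range ⌈t / f⌉₊) fun n hn => ?_
  rw [Finset.mem_range, not_lt, Nat.ceil_le, div_le_iff₀ hf0] at hn
  exact dbfTerm_of_lt_mul (by push_cast; nlinarith)

end DbfTerm

theorem stmt_18_general
    (f : ℝ) (hf0 : 0 < f) (hf1 : f < 1)
    (g : ℕ → ℝ → ℝ)
    (hg : ∀ ℓ : ℕ, 1 ≤ ℓ → ∀ t : ℝ,
      g ℓ t = if t < ℓ * f then 0 else if t < ℓ then (t - ℓ * f) / ℓ else 1 - f)
    (G : ℝ → ℝ)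
    (hG : ∀ t : ℝ, G t = 1.5 * f - 1 + ∑' ℓ : ℕ, g (ℓ + 1) t) :
    ∀ ℓ : ℕ, 1 ≤ ℓ → ∀ t : ℝ, (ℓ : ℝ) ≤ t → t ≤ (ℓ : ℝ) + 1 →
      G t / t ≤ max (G (ℓ : ℝ) / (ℓ : ℝ)) (G ((ℓ : ℝ) + 1) / ((ℓ : ℝ) + 1)) := by
  intro ℓ hℓ t ht₁ ht₂
  have hG_eq : G = fun s => 1.5 * f - 1 + ∑' n : ℕ, dbfTerm f (n + 1) s :=
    funext fun s => by rw [hG]; exact congrArg _ (tsum_congr fun n => hg (n + 1) n.succ_pos s)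
  have hG_convex : ConvexOn ℝ (Icc (ℓ : ℝ) (ℓ + 1)) G := by
    rw [hG_eq]
    exact (convexOn_const _ (convex_Icc _ _)).add <| ConvexOn.tsum (convex_Icc _ _)
      (fun n => convexOn_dbfTerm_Icc hf1.le n.succ_pos ℓ) (fun s _ => summable_dbfTerm hf0 s)
  exact div_le_max_div_of_convexOn (Nat.cast_pos.2 hℓ) hG_convex ⟨ht₁, ht₂⟩

/-- Piecewise-linear maximization claim of Appendix A of the paper: on each
interval `[ℓ, ℓ+1]` the maximum of `G(t)/t` is attained at an integer
endpoint, where `f ∈ (0,1)` is the unique root of `ln(1/f) = f/2`. -/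
theorem stmt_18
    (f : ℝ) (hf0 : 0 < f) (hf1 : f < 1)
    (hf : Real.log (1 / f) = f / 2)
    (g : ℕ → ℝ → ℝ)
    (hg : ∀ ℓ : ℕ, 1 ≤ ℓ → ∀ t : ℝ,
      g ℓ t = if t < ℓ * f then 0 else if t < ℓ then (t - ℓ * f) / ℓ else 1 - f)
    (G : ℝ → ℝ)
    (hG : ∀ t : ℝ, G t = 1.5 * f - 1 + ∑' ℓ : ℕ, g (ℓ + 1) t) :
    ∀ ℓ : ℕ, 1 ≤ ℓ → ∀ t : ℝ, (ℓ : ℝ) ≤ t → t ≤ (ℓ : ℝ) + 1 →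
      G t / t ≤ max (G (ℓ : ℝ) / (ℓ : ℝ)) (G ((ℓ : ℝ) + 1) / ((ℓ : ℝ) + 1)) :=
  stmt_18_general f hf0 hf1 g hg G hG
end
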